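/- arXiv:1512.04979 — 7 statements merged into one kernel-verified Lean document; each statement's English description precedes it below -/
import Mathlib

section
/- Let J be an index set, H a complex Hilbert space, and let K = (K_{ij})_{(i,j)∈J×J} and L = (L_{ij})_{(i,j)∈J×J} be families of bounded operators on H. Suppose K is row bounded with constant R ≥ 0, i.e. for every i ∈ J and every finite subset J₀ ⊆ J one has ‖∑_{j∈J₀} K_{ij} K_{ij}*‖ ≤ R², and L is column bounded with constant C ≥ 0, i.e. for every j ∈ J and every finite subset I₀ ⊆ J one has ‖∑_{i∈I₀} L_{ij}* L_{ij}‖ ≤ C². Then the Schur (entrywise) product matrix (K_{ij} L_{ij}) is bounded with norm at most R·C; concretely, for every finite subset J₀ ⊆ J and every family of vectors (ξ_j)_{j∈J₀} in H, one has ∑_{i∈J} ‖∑_{j∈J₀} K_{ij} L_{ij} ξ_j‖² ≤ R² C² ∑_{j∈J₀} ‖ξ_j‖². -/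
open ContinuousLinearMap RCLike

local notation "⟪" x ", " y "⟫" => @inner ℂ _ _ x y

/-- Column-bound lemma: a single vector variant. -/
lemma col_single_bound
    {H : Type*} [NormedAddCommGroup H] [InnerProductSpace ℂ H] [CompleteSpace H]
    {J : Type*} (T : J → (H →L[ℂ] H)) (C : ℝ) (I₀ : Finset J)
    (h : ‖∑ i ∈ I₀, star (T i) * T i‖ ≤ C ^ 2) (ξ : H) :
    ∑ i ∈ I₀, ‖(T i) ξ‖ ^ 2 ≤ C ^ 2 * ‖ξ‖ ^ 2 := by
  have key : ∑ i ∈ I₀, ‖(T i) ξ‖ ^ 2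
      = re ⟪(∑ i ∈ I₀, star (T i) * T i) ξ, ξ⟫ := by
    rw [ContinuousLinearMap.sum_apply, sum_inner, map_sum]
    refine Finset.sum_congr rfl fun i _ => ?_
    rw [ContinuousLinearMap.mul_apply, ContinuousLinearMap.star_eq_adjoint,
      ContinuousLinearMap.adjoint_inner_left]
    simp [inner_self_eq_norm_sq]
    rw [← Complex.ofReal_pow, Complex.ofReal_re]
  rw [key]
  calc re ⟪(∑ i ∈ I₀, star (T i) * T i) ξ, ξ⟫
      ≤ ‖⟪(∑ i ∈ I₀, star (T i) * T i) ξ, ξ⟫‖ := RCLike.re_le_norm _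
    _ ≤ ‖(∑ i ∈ I₀, star (T i) * T i) ξ‖ * ‖ξ‖ := norm_inner_le_norm _ _
    _ ≤ (‖∑ i ∈ I₀, star (T i) * T i‖ * ‖ξ‖) * ‖ξ‖ := by
        gcongr; exact (∑ i ∈ I₀, star (T i) * T i).le_opNorm ξ
    _ ≤ (C ^ 2 * ‖ξ‖) * ‖ξ‖ := by gcongr
    _ = C ^ 2 * ‖ξ‖ ^ 2 := by ring

/-- Row-bound lemma. -/
lemma row_bound
    {H : Type*} [NormedAddCommGroup H] [InnerProductSpace ℂ H] [CompleteSpace H]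
    {J : Type*} (T : J → (H →L[ℂ] H)) (R : ℝ) (J₀ : Finset J)
    (h : ‖∑ j ∈ J₀, T j * star (T j)‖ ≤ R ^ 2) (η : J → H) :
    ‖∑ j ∈ J₀, (T j) (η j)‖ ^ 2 ≤ R ^ 2 * ∑ j ∈ J₀, ‖η j‖ ^ 2 := by
  set v := ∑ j ∈ J₀, (T j) (η j) with hv
  have hstar : ∑ j ∈ J₀, ‖(star (T j)) v‖ ^ 2 ≤ R ^ 2 * ‖v‖ ^ 2 := by
    have key : ∑ j ∈ J₀, ‖(star (T j)) v‖ ^ 2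
        = re ⟪(∑ j ∈ J₀, T j * star (T j)) v, v⟫ := by
      rw [ContinuousLinearMap.sum_apply, sum_inner, map_sum]
      refine Finset.sum_congr rfl fun j _ => ?_
      rw [ContinuousLinearMap.mul_apply, ContinuousLinearMap.star_eq_adjoint,
        ← ContinuousLinearMap.adjoint_inner_right]
      simp [inner_self_eq_norm_sq]
      rw [← Complex.ofReal_pow, Complex.ofReal_re]
    rw [key]
    calc re ⟪(∑ j ∈ J₀, T j * star (T j)) v, v⟫
        ≤ ‖⟪(∑ j ∈ J₀, T j * star (T j)) v, v⟫‖ := RCLike.re_le_norm _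
      _ ≤ ‖(∑ j ∈ J₀, T j * star (T j)) v‖ * ‖v‖ := norm_inner_le_norm _ _
      _ ≤ (‖∑ j ∈ J₀, T j * star (T j)‖ * ‖v‖) * ‖v‖ := by
          gcongr; exact (∑ j ∈ J₀, T j * star (T j)).le_opNorm v
      _ ≤ (R ^ 2 * ‖v‖) * ‖v‖ := by gcongr
      _ = R ^ 2 * ‖v‖ ^ 2 := by ring
  have hcs : (‖v‖ ^ 2) ^ 2
      ≤ (∑ j ∈ J₀, ‖η j‖ ^ 2) * ∑ j ∈ J₀, ‖(star (T j)) v‖ ^ 2 := by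
    have h1 : ‖v‖ ^ 2 = re ⟪v, v⟫ := (inner_self_eq_norm_sq v).symm
    have h2 : re ⟪v, v⟫ ≤ ∑ j ∈ J₀, ‖η j‖ * ‖(star (T j)) v‖ := by
      nth_rewrite 1 [hv]
      rw [sum_inner, map_sum]
      refine Finset.sum_le_sum fun j _ => ?_
      have : ⟪(T j) (η j), v⟫ = ⟪η j, (star (T j)) v⟫ := by
        rw [ContinuousLinearMap.star_eq_adjoint, ContinuousLinearMap.adjoint_inner_right]
      rw [this]
      exact re_inner_le_norm _ _
    calc (‖v‖ ^ 2) ^ 2 ≤ (∑ j ∈ J₀, ‖η j‖ * ‖(star (T j)) v‖) ^ 2 := by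
          rw [h1]; have hnn : (0:ℝ) ≤ re ⟪v, v⟫ := by rw [← h1]; positivity
          exact pow_le_pow_left₀ hnn h2 2
      _ ≤ (∑ j ∈ J₀, ‖η j‖ ^ 2) * ∑ j ∈ J₀, ‖(star (T j)) v‖ ^ 2 :=
          Finset.sum_mul_sq_le_sq_mul_sq _ _ _
  have hfin : (‖v‖ ^ 2) ^ 2 ≤ (R ^ 2 * ∑ j ∈ J₀, ‖η j‖ ^ 2) * ‖v‖ ^ 2 := by
    calc (‖v‖ ^ 2) ^ 2
        ≤ (∑ j ∈ J₀, ‖η j‖ ^ 2) * ∑ j ∈ J₀, ‖(star (T j)) v‖ ^ 2 := hcs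
      _ ≤ (∑ j ∈ J₀, ‖η j‖ ^ 2) * (R ^ 2 * ‖v‖ ^ 2) := by
          refine mul_le_mul_of_nonneg_left hstar ?_
          positivity
      _ = (R ^ 2 * ∑ j ∈ J₀, ‖η j‖ ^ 2) * ‖v‖ ^ 2 := by ring
  by_cases hv0 : ‖v‖ ^ 2 = 0
  · rw [hv0]; positivity
  · have : 0 < ‖v‖ ^ 2 := lt_of_le_of_ne (by positivity) (Ne.symm hv0)
    exact le_of_mul_le_mul_right (by simpa [pow_two] using hfin) this

open ContinuousLinearMap in
/-- Operator-space version of Bennett's theorem on Schur products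
(Theorem 2.2 of the paper). -/
theorem schur_product_row_column_bounded
    {H : Type*} [NormedAddCommGroup H] [InnerProductSpace ℂ H] [CompleteSpace H]
    {J : Type*} (K L : J → J → (H →L[ℂ] H)) (R C : ℝ) (hR : 0 ≤ R) (hC : 0 ≤ C)
    (hrow : ∀ i : J, ∀ J₀ : Finset J,
      ‖∑ j ∈ J₀, K i j * star (K i j)‖ ≤ R ^ 2)
    (hcol : ∀ j : J, ∀ I₀ : Finset J,
      ‖∑ i ∈ I₀, star (L i j) * L i j‖ ≤ C ^ 2) :
    ∀ (I₀ J₀ : Finset J) (ξ : J → H),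
      ∑ i ∈ I₀, ‖∑ j ∈ J₀, (K i j) ((L i j) (ξ j))‖ ^ 2 ≤
        R ^ 2 * C ^ 2 * ∑ j ∈ J₀, ‖ξ j‖ ^ 2 := by
  intro I₀ J₀ ξ
  calc ∑ i ∈ I₀, ‖∑ j ∈ J₀, (K i j) ((L i j) (ξ j))‖ ^ 2
      ≤ ∑ i ∈ I₀, R ^ 2 * ∑ j ∈ J₀, ‖(L i j) (ξ j)‖ ^ 2 :=
        Finset.sum_le_sum fun i _ => row_bound (K i) R J₀ (hrow i J₀) _
    _ = R ^ 2 * ∑ j ∈ J₀, ∑ i ∈ I₀, ‖(L i j) (ξ j)‖ ^ 2 := by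
        rw [← Finset.mul_sum, Finset.sum_comm]
    _ ≤ R ^ 2 * ∑ j ∈ J₀, C ^ 2 * ‖ξ j‖ ^ 2 := by
        refine mul_le_mul_of_nonneg_left (Finset.sum_le_sum fun j _ => ?_) (by positivity)
        exact col_single_bound (fun i => L i j) C I₀ (hcol j I₀) (ξ j)
    _ = R ^ 2 * C ^ 2 * ∑ j ∈ J₀, ‖ξ j‖ ^ 2 := by
        rw [← Finset.mul_sum]; ring
end

section
/- Let H be a complex Hilbert space, J an index set, and (e_j)_{j∈J} a family of pairwise orthogonal orthogonal projections on H whose sum is the identity in the strong operator topology. Let S = (S_{ij})_{(i,j)∈J×J} be a complex scalar matrix which is row bounded with constant R ≥ 0, i.e. ∑_{j∈J} |S_{ij}|² ≤ R² for every i ∈ J, and let y be a bounded operator on H. Then there exists a bounded operator T on H with ‖T‖ ≤ R·‖y‖ such that e_i T e_j = S_{ij} · e_i y e_j for all i, j ∈ J. -/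
set_option maxHeartbeats 1000000

open scoped InnerProductSpace

section helpers
variable {H : Type*} [NormedAddCommGroup H] [InnerProductSpace ℂ H] {J : Type*}

private lemma pyth_sum {v : J → H} (hv : ∀ i j, i ≠ j → ⟪v i, v j⟫_ℂ = 0) (t : Finset J) :
    ‖∑ j ∈ t, v j‖ ^ 2 = ∑ j ∈ t, ‖v j‖ ^ 2 := by
  classical
  induction t using Finset.induction_on with
  | empty => simp
  | @insert a s ha ih =>
    rw [Finset.sum_insert ha, Finset.sum_insert ha, ← ih, @norm_add_sq ℂ]
    have : ⟪v a, ∑ j ∈ s, v j⟫_ℂ = 0 := by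
      rw [inner_sum]
      refine Finset.sum_eq_zero fun j hj => hv a j ?_
      rintro rfl; exact ha hj
    rw [this]
    simp

private lemma orth_summable [CompleteSpace H] {v : J → H}
    (hv : ∀ i j, i ≠ j → ⟪v i, v j⟫_ℂ = 0)
    (h2 : Summable fun j => ‖v j‖ ^ 2) : Summable v := by
  rw [summable_iff_vanishing_norm]
  intro ε hε
  obtain ⟨s, hs⟩ := summable_iff_vanishing_norm.mp h2 (ε ^ 2) (by positivity)
  refine ⟨s, fun t ht => ?_⟩
  have h1 := hs t ht
  have h2' : ‖∑ j ∈ t, v j‖ ^ 2 < ε ^ 2 := by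
    rw [pyth_sum hv t]
    calc ∑ j ∈ t, ‖v j‖ ^ 2 ≤ ‖∑ j ∈ t, ‖v j‖ ^ 2‖ := le_abs_self _
    _ < ε ^ 2 := h1
  exact lt_of_pow_lt_pow_left₀ 2 hε.le h2'

private lemma orth_hasSum_norm {v : J → H} {x : H}
    (hv : ∀ i j, i ≠ j → ⟪v i, v j⟫_ℂ = 0)
    (hx : HasSum v x) : HasSum (fun j => ‖v j‖ ^ 2) (‖x‖ ^ 2) := by
  have h1 : HasSum (fun j => ⟪x, v j⟫_ℂ) ⟪x, x⟫_ℂ := hx.mapL (innerSL ℂ x)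
  have h2 : ∀ j, ⟪x, v j⟫_ℂ = ((‖v j‖ ^ 2 : ℝ) : ℂ) := by
    intro j
    have h3 : HasSum (fun k => ⟪v j, v k⟫_ℂ) ⟪v j, x⟫_ℂ := hx.mapL (innerSL ℂ (v j))
    have h4 : HasSum (fun k => ⟪v j, v k⟫_ℂ) ⟪v j, v j⟫_ℂ := by
      simpa using hasSum_single (f := fun k => ⟪v j, v k⟫_ℂ) j
        (fun k hk => hv j k (Ne.symm hk))
    have h5 : ⟪v j, x⟫_ℂ = ⟪v j, v j⟫_ℂ := h3.unique h4
    rw [← inner_conj_symm, h5, inner_self_eq_norm_sq_to_K]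
    simp
  have h6 : HasSum (fun j => Complex.re (⟪x, v j⟫_ℂ)) (Complex.re ⟪x, x⟫_ℂ) :=
    h1.mapL Complex.reCLM
  have hxx : (⟪x, x⟫_ℂ).re = ‖x‖ ^ 2 := by
    rw [inner_self_eq_norm_sq_to_K]
    norm_cast
  rw [← hxx]
  refine HasSum.congr_fun h6 fun j => ?_
  rw [h2 j, Complex.ofReal_re]

end helpers

/-- Corollary 2.3 of the paper: the Schur product of a row-bounded scalar matrix
with the matrix `(e_i y e_j)` of a bounded operator is (the matrix of) a bounded
operator of norm at most `R · ‖y‖`. -/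
theorem schur_product_scalar_matrix_bounded
    {H : Type*} [NormedAddCommGroup H] [InnerProductSpace ℂ H] [CompleteSpace H]
    {J : Type*} (e : J → (H →L[ℂ] H))
    (heproj : ∀ j, IsIdempotentElem (e j) ∧ IsSelfAdjoint (e j))
    (horth : ∀ i j, i ≠ j → e i * e j = 0)
    (hsum : ∀ ξ : H, HasSum (fun j => e j ξ) ξ)
    (S : J → J → ℂ) (R : ℝ) (hR : 0 ≤ R)
    (hrow : ∀ i : J, ∀ J₀ : Finset J, ∑ j ∈ J₀, ‖S i j‖ ^ 2 ≤ R ^ 2)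
    (y : H →L[ℂ] H) :
    ∃ T : H →L[ℂ] H, ‖T‖ ≤ R * ‖y‖ ∧
      ∀ i j : J, e i * T * e j = S i j • (e i * y * e j) := by
  classical
  have hEinner : ∀ (i : J) (x w : H), ⟪(e i) x, w⟫_ℂ = ⟪x, (e i) w⟫_ℂ := by
    intro i x w
    have h := ContinuousLinearMap.isSelfAdjoint_iff'.mp (heproj i).2
    conv_lhs => rw [← h]
    exact ContinuousLinearMap.adjoint_inner_left (e i) w x
  have horthvec : ∀ (i j : J), i ≠ j → ∀ (x w : H), ⟪(e i) x, (e j) w⟫_ℂ = 0 := by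
    intro i j hij x w
    rw [hEinner]
    have h1 : (e i) ((e j) w) = ((e i * e j) : H →L[ℂ] H) w := rfl
    rw [h1, horth i j hij]
    simp
  have hbessel : ∀ v : H, HasSum (fun j => ‖(e j) v‖ ^ 2) (‖v‖ ^ 2) := fun v =>
    orth_hasSum_norm (fun i j hij => horthvec i j hij v v) (hsum v)
  have hidem : ∀ (j : J) (x : H), (e j) ((e j) x) = (e j) x := by
    intro j x
    have h1 : (e j) ((e j) x) = ((e j * e j) : H →L[ℂ] H) x := rfl
    rw [h1, (heproj j).1]
  have hzero : ∀ (i j : J), i ≠ j → ∀ x : H, (e i) ((e j) x) = 0 := by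
    intro i j hij x
    have h1 : (e i) ((e j) x) = ((e i * e j) : H →L[ℂ] H) x := rfl
    rw [h1, horth i j hij]
    rfl
  have hS : ∀ i j, ‖S i j‖ ^ 2 ≤ R ^ 2 := fun i j => by simpa using hrow i {j}
  -- the "row contraction" n i ξ = ∑_j S i j • e j ξ
  have hnsummable : ∀ (i : J) (ξ : H), Summable (fun j => S i j • (e j) ξ) := by
    intro i ξ
    refine orth_summable (fun k l hkl => ?_) ?_
    · rw [inner_smul_left, inner_smul_right, horthvec k l hkl, mul_zero, mul_zero]
    · refine Summable.of_nonneg_of_le (fun j => sq_nonneg _) (fun j => ?_)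
        (((hbessel ξ).summable).mul_left (R ^ 2))
      rw [norm_smul, mul_pow]
      exact mul_le_mul_of_nonneg_right (hS i j) (sq_nonneg _)
  set n : J → H → H := fun i ξ => ∑' j, S i j • (e j) ξ with hn
  have hnHasSum : ∀ (i : J) (ξ : H), HasSum (fun j => S i j • (e j) ξ) (n i ξ) :=
    fun i ξ => (hnsummable i ξ).hasSum
  have hwHasSum : ∀ (i : J) (ξ : H),
      HasSum (fun j => S i j • (e i) (y ((e j) ξ))) ((e i) (y (n i ξ))) := by
    intro i ξ
    have h1 := (hnHasSum i ξ).mapL ((e i).comp y)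
    simp only [ContinuousLinearMap.coe_comp', Function.comp_apply, map_smul] at h1
    exact h1
  set Tfun : H → H := fun ξ => ∑' i, (e i) (y (n i ξ)) with hTfun
  have key : ∀ ξ : H, HasSum (fun i => (e i) (y (n i ξ))) (Tfun ξ) ∧
      ‖Tfun ξ‖ ≤ R * ‖y‖ * ‖ξ‖ := by
    intro ξ
    set d : J × J → ℝ := fun p => ‖(e p.2) (y ((e p.1) ξ))‖ ^ 2 with hd_def
    have hd_nonneg : 0 ≤ d := fun p => sq_nonneg _
    have hdj : ∀ j : J, HasSum (fun i => d (j, i)) (‖y ((e j) ξ)‖ ^ 2) := by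
      intro j
      rw [hd_def]
      exact hbessel (y ((e j) ξ))
    have hc_le : ∀ j : J, ‖y ((e j) ξ)‖ ^ 2 ≤ ‖y‖ ^ 2 * ‖(e j) ξ‖ ^ 2 := by
      intro j
      rw [← mul_pow]
      exact pow_le_pow_left₀ (norm_nonneg _) (y.le_opNorm _) 2
    have hc_summable : Summable fun j => ‖y ((e j) ξ)‖ ^ 2 :=
      Summable.of_nonneg_of_le (fun j => sq_nonneg _) hc_le
        (((hbessel ξ).summable).mul_left (‖y‖ ^ 2))
    have hc_tsum : (∑' j, ‖y ((e j) ξ)‖ ^ 2) ≤ ‖y‖ ^ 2 * ‖ξ‖ ^ 2 := by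
      calc (∑' j, ‖y ((e j) ξ)‖ ^ 2) ≤ ∑' j, ‖y‖ ^ 2 * ‖(e j) ξ‖ ^ 2 :=
            Summable.tsum_le_tsum hc_le hc_summable (((hbessel ξ).summable).mul_left (‖y‖ ^ 2))
        _ = ‖y‖ ^ 2 * ∑' j, ‖(e j) ξ‖ ^ 2 := tsum_mul_left
        _ = ‖y‖ ^ 2 * ‖ξ‖ ^ 2 := by rw [(hbessel ξ).tsum_eq]
    have hd : Summable d := by
      refine (summable_prod_of_nonneg hd_nonneg).mpr ⟨fun j => (hdj j).summable, ?_⟩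
      refine hc_summable.congr fun j => ?_
      exact ((hdj j).tsum_eq).symm
    set b : J → ℝ := fun i => ∑' j, d (j, i) with hb_def
    have hb_nonneg : ∀ i, 0 ≤ b i := fun i => tsum_nonneg fun j => sq_nonneg _
    have hdswap : Summable fun p : J × J => d p.swap := hd.prod_symm
    have hb_summable : Summable b := hdswap.prod
    have hb_tsum : (∑' i, b i) ≤ ‖y‖ ^ 2 * ‖ξ‖ ^ 2 := by
      have e1 : (∑' p : J × J, d p.swap) = ∑' i, b i := Summable.tsum_prod hdswap
      have e2 : (∑' p : J × J, d ((Equiv.prodComm J J) p)) = ∑' p : J × J, d p :=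
        (Equiv.prodComm J J).tsum_eq d
      have e2' : (∑' p : J × J, d p.swap) = ∑' p : J × J, d p := e2
      have e3 : (∑' p : J × J, d p) = ∑' j, ∑' i, d (j, i) := Summable.tsum_prod hd
      rw [← e1, e2', e3]
      calc (∑' j, ∑' i, d (j, i)) = ∑' j, ‖y ((e j) ξ)‖ ^ 2 := by
            refine tsum_congr fun j => (hdj j).tsum_eq
        _ ≤ ‖y‖ ^ 2 * ‖ξ‖ ^ 2 := hc_tsum
    have hg_bound : ∀ i : J, ∀ F : Finset J,
        ∑ j ∈ F, ‖S i j‖ * ‖(e i) (y ((e j) ξ))‖ ≤ R * Real.sqrt (b i) := by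
      intro i F
      have cs := Finset.sum_mul_sq_le_sq_mul_sq F (fun j => ‖S i j‖)
        (fun j => ‖(e i) (y ((e j) ξ))‖)
      have h1 : ∑ j ∈ F, ‖S i j‖ ^ 2 ≤ R ^ 2 := hrow i F
      have h2 : ∑ j ∈ F, ‖(e i) (y ((e j) ξ))‖ ^ 2 ≤ b i := by
        refine Summable.sum_le_tsum F (fun j _ => sq_nonneg _) ?_
        exact hdswap.prod_factor i
      have hsum_nonneg : (0:ℝ) ≤ ∑ j ∈ F, ‖S i j‖ * ‖(e i) (y ((e j) ξ))‖ :=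
        Finset.sum_nonneg fun j _ => mul_nonneg (norm_nonneg _) (norm_nonneg _)
      have hF2_nonneg : (0:ℝ) ≤ ∑ j ∈ F, ‖(e i) (y ((e j) ξ))‖ ^ 2 :=
        Finset.sum_nonneg fun j _ => sq_nonneg _
      have hsq : (∑ j ∈ F, ‖S i j‖ * ‖(e i) (y ((e j) ξ))‖) ^ 2 ≤ R ^ 2 * b i :=
        le_trans cs (mul_le_mul h1 h2 hF2_nonneg (sq_nonneg R))
      have h3 : ∑ j ∈ F, ‖S i j‖ * ‖(e i) (y ((e j) ξ))‖ ≤ Real.sqrt (R ^ 2 * b i) :=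
        (Real.le_sqrt hsum_nonneg (mul_nonneg (sq_nonneg R) (hb_nonneg i))).mpr hsq
      rwa [Real.sqrt_mul (sq_nonneg R), Real.sqrt_sq hR] at h3
    have hg_summable : ∀ i, Summable fun j => ‖S i j • (e i) (y ((e j) ξ))‖ := by
      intro i
      refine summable_of_sum_le (c := R * Real.sqrt (b i)) (fun j => norm_nonneg _) fun F => ?_
      calc ∑ j ∈ F, ‖S i j • (e i) (y ((e j) ξ))‖
          = ∑ j ∈ F, ‖S i j‖ * ‖(e i) (y ((e j) ξ))‖ := by simp [norm_smul]
        _ ≤ R * Real.sqrt (b i) := hg_bound i F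
    have hw_norm : ∀ i, ‖(e i) (y (n i ξ))‖ ≤ R * Real.sqrt (b i) := by
      intro i
      rw [← (hwHasSum i ξ).tsum_eq]
      refine le_trans (norm_tsum_le_tsum_norm (hg_summable i)) ?_
      refine Summable.tsum_le_of_sum_le (hg_summable i) fun F => ?_
      calc ∑ j ∈ F, ‖S i j • (e i) (y ((e j) ξ))‖
          = ∑ j ∈ F, ‖S i j‖ * ‖(e i) (y ((e j) ξ))‖ := by simp [norm_smul]
        _ ≤ R * Real.sqrt (b i) := hg_bound i F
    have hw_sq : ∀ i, ‖(e i) (y (n i ξ))‖ ^ 2 ≤ R ^ 2 * b i := by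
      intro i
      calc ‖(e i) (y (n i ξ))‖ ^ 2 ≤ (R * Real.sqrt (b i)) ^ 2 :=
            pow_le_pow_left₀ (norm_nonneg _) (hw_norm i) 2
        _ = R ^ 2 * b i := by rw [mul_pow, Real.sq_sqrt (hb_nonneg i)]
    have hw_sq_summable : Summable fun i => ‖(e i) (y (n i ξ))‖ ^ 2 :=
      Summable.of_nonneg_of_le (fun i => sq_nonneg _) hw_sq (hb_summable.mul_left _)
    have hT : HasSum (fun i => (e i) (y (n i ξ))) (Tfun ξ) :=
      (orth_summable (fun i k hik => horthvec i k hik _ _) hw_sq_summable).hasSum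
    refine ⟨hT, ?_⟩
    have hTnormsq : HasSum (fun i => ‖(e i) (y (n i ξ))‖ ^ 2) (‖Tfun ξ‖ ^ 2) :=
      orth_hasSum_norm (fun i k hik => horthvec i k hik _ _) hT
    have h9 : ‖Tfun ξ‖ ^ 2 ≤ R ^ 2 * (‖y‖ ^ 2 * ‖ξ‖ ^ 2) := by
      rw [← hTnormsq.tsum_eq]
      calc (∑' i, ‖(e i) (y (n i ξ))‖ ^ 2) ≤ ∑' i, R ^ 2 * b i :=
            Summable.tsum_le_tsum hw_sq hTnormsq.summable (hb_summable.mul_left _)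
        _ = R ^ 2 * ∑' i, b i := tsum_mul_left
        _ ≤ R ^ 2 * (‖y‖ ^ 2 * ‖ξ‖ ^ 2) :=
            mul_le_mul_of_nonneg_left hb_tsum (sq_nonneg R)
    have h10 : (R * ‖y‖ * ‖ξ‖) ^ 2 = R ^ 2 * (‖y‖ ^ 2 * ‖ξ‖ ^ 2) := by ring
    calc ‖Tfun ξ‖ = Real.sqrt (‖Tfun ξ‖ ^ 2) := (Real.sqrt_sq (norm_nonneg _)).symm
      _ ≤ Real.sqrt ((R * ‖y‖ * ‖ξ‖) ^ 2) := Real.sqrt_le_sqrt (by rw [h10]; exact h9)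
      _ = R * ‖y‖ * ‖ξ‖ := Real.sqrt_sq (by positivity)
  have hadd : ∀ ξ η : H, Tfun (ξ + η) = Tfun ξ + Tfun η := by
    intro ξ η
    have h1 : ∀ i, n i (ξ + η) = n i ξ + n i η := by
      intro i
      have h2 := (hnHasSum i ξ).add (hnHasSum i η)
      have h3 : (fun j => S i j • (e j) ξ + S i j • (e j) η)
          = fun j => S i j • (e j) (ξ + η) := by
        funext j; rw [map_add, smul_add]
      rw [h3] at h2
      exact (hnHasSum i (ξ + η)).unique h2
    have h4 := ((key ξ).1.add (key η).1)
    have h5 : (fun i => (e i) (y (n i ξ)) + (e i) (y (n i η)))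
        = fun i => (e i) (y (n i (ξ + η))) := by
      funext i; rw [h1 i, map_add, map_add]
    rw [h5] at h4
    exact (key (ξ + η)).1.unique h4
  have hsmul : ∀ (c : ℂ) (ξ : H), Tfun (c • ξ) = c • Tfun ξ := by
    intro c ξ
    have h1 : ∀ i, n i (c • ξ) = c • n i ξ := by
      intro i
      have h2 := (hnHasSum i ξ).const_smul c
      have h3 : (fun j => c • (S i j • (e j) ξ)) = fun j => S i j • (e j) (c • ξ) := by
        funext j; rw [map_smul, smul_comm]
      rw [h3] at h2
      exact (hnHasSum i (c • ξ)).unique h2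
    have h4 := (key ξ).1.const_smul c
    have h5 : (fun i => c • ((e i) (y (n i ξ)))) = fun i => (e i) (y (n i (c • ξ))) := by
      funext i; rw [h1 i, map_smul, map_smul]
    rw [h5] at h4
    exact (key (c • ξ)).1.unique h4
  set T : H →L[ℂ] H := LinearMap.mkContinuous
    { toFun := Tfun, map_add' := hadd, map_smul' := hsmul } (R * ‖y‖)
    (fun ξ => by simpa [mul_assoc] using (key ξ).2) with hT_def
  refine ⟨T, ?_, ?_⟩
  · exact LinearMap.mkContinuous_norm_le _ (by positivity) _
  · intro i j
    ext ξ
    simp only [ContinuousLinearMap.mul_apply, ContinuousLinearMap.smul_apply]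
    have hTapp : T ((e j) ξ) = Tfun ((e j) ξ) := rfl
    have hnj : n i ((e j) ξ) = S i j • (e j) ξ := by
      have h1 : HasSum (fun l => S i l • (e l) ((e j) ξ)) (S i j • (e j) ξ) := by
        have h2 := hasSum_single (f := fun l => S i l • (e l) ((e j) ξ)) j
          (fun l hl => by show S i l • (e l) ((e j) ξ) = 0; rw [hzero l j hl, smul_zero])
        simpa [hidem j ξ] using h2
      exact (hnHasSum i ((e j) ξ)).unique h1
    have h3 : HasSum (fun k => (e i) ((e k) (y (n k ((e j) ξ)))))
        ((e i) (Tfun ((e j) ξ))) := ((key ((e j) ξ)).1).mapL (e i)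
    have h4 : HasSum (fun k => (e i) ((e k) (y (n k ((e j) ξ)))))
        ((e i) (y (n i ((e j) ξ)))) := by
      have h5 := hasSum_single (f := fun k => (e i) ((e k) (y (n k ((e j) ξ))))) i
        (fun k hk => hzero i k (Ne.symm hk) _)
      simpa [hidem i] using h5
    have h6 : (e i) (Tfun ((e j) ξ)) = (e i) (y (n i ((e j) ξ))) := h3.unique h4
    rw [hTapp, h6, hnj, map_smul, map_smul]
end

section
/- Let α > 0, A ≥ 0, B ≥ 0, and let g : ℝ → ℂ satisfy |g(s) − g(t)| ≤ A + B·|s − t|^α for all real s, t. Let n be a natural number with n > α + 1/2. Then for every integer i, the sum over all integers j ≠ i of |g(i) − g(j)|² / (i − j)^{2n} is at most 4(A+B)²·(n − α)/(2n − 2α − 1). -/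
open Finset

lemma aux_sum_rpow_neg_le (p : ℝ) (hp : 1 < p) (T : Finset ℕ) (hT : ∀ k ∈ T, 1 ≤ k) :
    ∑ k ∈ T, ((k : ℝ)) ^ (-p) ≤ p / (p - 1) := by
  have h0 : (0:ℝ) < p - 1 := by linarith
  rcases T.eq_empty_or_nonempty with rfl | hne
  · simp; positivity
  have hN1 : 1 ≤ T.max' hne := hT _ (T.max'_mem hne)
  obtain ⟨M, hM⟩ : ∃ M, T.max' hne = M + 1 := ⟨T.max' hne - 1, by omega⟩
  have hsub : T ⊆ Finset.Icc 1 (M + 1) := fun k hk =>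
    Finset.mem_Icc.mpr ⟨hT k hk, hM ▸ Finset.le_max' T k hk⟩
  have h1 : ∑ k ∈ T, ((k:ℝ)) ^ (-p) ≤ ∑ k ∈ Finset.Icc 1 (M+1), ((k:ℝ)) ^ (-p) :=
    Finset.sum_le_sum_of_subset_of_nonneg hsub (by intros; positivity)
  refine h1.trans ?_
  have h2 : ∑ k ∈ Finset.Icc 1 (M+1), ((k:ℝ)) ^ (-p)
      = ∑ i ∈ Finset.range M, (((1+(i+1):ℕ):ℝ)) ^ (-p) + 1 := by
    rw [show Finset.Icc 1 (M+1) = Finset.Ico 1 (M+2) by rfl, Finset.sum_Ico_eq_sum_range]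
    have hMM : M + 2 - 1 = M + 1 := by omega
    rw [hMM, Finset.sum_range_succ' (fun i => (((1+i:ℕ):ℝ)) ^ (-p)) M]
    norm_num
  rw [h2]
  have hanti : AntitoneOn (fun x : ℝ => x ^ (-p)) (Set.Icc 1 (1 + (M:ℝ))) := by
    intro x hx y hy hxy
    exact Real.rpow_le_rpow_of_nonpos (lt_of_lt_of_le one_pos hx.1) hxy (by linarith)
  have h3 := hanti.sum_le_integral
  have hne1 : -p ≠ -1 := by
    intro h
    have hp1 : p = 1 := by linarith
    rw [hp1] at hp
    exact lt_irrefl 1 hp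
  have h4 : ∫ x in (1:ℝ)..(1 + (M:ℝ)), x ^ (-p)
      = ((1 + (M:ℝ)) ^ (-p + 1) - 1 ^ (-p+1)) / (-p + 1) := by
    apply integral_rpow
    refine Or.inr ⟨hne1, ?_⟩
    rw [Set.uIcc_of_le (le_add_of_nonneg_right (Nat.cast_nonneg M))]
    intro h
    exact absurd h.1 (by norm_num)
  have h5 : ((1 + (M:ℝ)) ^ (-p + 1) - 1 ^ (-p+1)) / (-p + 1) ≤ 1 / (p - 1) := by
    have hc : (0:ℝ) ≤ (1 + (M:ℝ)) ^ (-p + 1) := Real.rpow_nonneg (by positivity) _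
    rw [Real.one_rpow]
    rw [show ((1 + (M:ℝ)) ^ (-p + 1) - 1) / (-p + 1)
        = (1 - (1 + (M:ℝ)) ^ (-p + 1)) / (p - 1) by
      rw [show (-p + 1 : ℝ) = -(p - 1) by ring, div_neg, ← neg_div]
      congr 1
      ring]
    gcongr
    linarith
  have h6 : ∑ i ∈ Finset.range M, (((1+(i+1):ℕ):ℝ)) ^ (-p) ≤ 1 / (p - 1) := by
    calc ∑ i ∈ Finset.range M, (((1+(i+1):ℕ):ℝ)) ^ (-p)
        = ∑ i ∈ Finset.range M, (fun x : ℝ => x ^ (-p)) (1 + ((i+1:ℕ):ℝ)) := by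
          apply Finset.sum_congr rfl; intros; push_cast; ring_nf
      _ ≤ ∫ x in (1:ℝ)..(1 + (M:ℝ)), x ^ (-p) := h3
      _ ≤ 1 / (p - 1) := by rw [h4]; exact h5
  have hfinal : 1 + 1 / (p - 1) = p / (p - 1) := by field_simp; ring
  linarith

/-- The row-norm estimate (gsum) for the Schur multiplier
`S_{ij} = (g(i) − g(j))/(i − j)^n` associated to an `(α, A, B)` Hölder bounded
function `g`, from the proof of Theorem 5.2 of the paper. -/
theorem holder_bounded_schur_multiplier_row_estimate
    (α A B : ℝ) (hα : 0 < α) (hA : 0 ≤ A) (hB : 0 ≤ B)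
    (g : ℝ → ℂ)
    (hg : ∀ s t : ℝ, ‖g s - g t‖ ≤ A + B * |s - t| ^ α)
    (n : ℕ) (hn : (n : ℝ) > α + 1 / 2) :
    ∀ (i : ℤ) (F : Finset ℤ), i ∉ F →
      ∑ j ∈ F, ‖g (i : ℝ) - g (j : ℝ)‖ ^ 2 / ((i : ℝ) - (j : ℝ)) ^ (2 * n) ≤
        4 * (A + B) ^ 2 * (n - α) / (2 * n - 2 * α - 1) := by
  intro i F hiF
  set p : ℝ := 2*(n:ℝ) - 2*α with hpdef
  have hp1 : 1 < p := by rw [hpdef]; linarith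
  have key : ∀ j ∈ F, ‖g (i:ℝ) - g (j:ℝ)‖ ^ 2 / ((i:ℝ)-(j:ℝ)) ^ (2*n)
      ≤ (A+B)^2 * (((i - j).natAbs : ℝ)) ^ (-p) := by
    intro j hj
    have hji : j ≠ i := fun h => hiF (h ▸ hj)
    set k : ℝ := ((i - j).natAbs : ℝ) with hk
    have hk1 : (1:ℝ) ≤ k := by
      rw [hk]; exact_mod_cast show 1 ≤ (i-j).natAbs by omega
    have hk0 : (0:ℝ) < k := lt_of_lt_of_le one_pos hk1
    have habs : |(i:ℝ) - (j:ℝ)| = k := by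
      rw [hk, show (i:ℝ) - (j:ℝ) = ((i - j : ℤ) : ℝ) by push_cast; ring,
        Nat.cast_natAbs, Int.cast_abs]
    have hden : ((i:ℝ)-(j:ℝ)) ^ (2*n) = k ^ (2*n) := by
      rw [← habs, (even_two_mul n).pow_abs]
    have hnum : ‖g (i:ℝ) - g (j:ℝ)‖ ≤ (A+B) * k ^ α := by
      have h1 := hg (i:ℝ) (j:ℝ)
      rw [habs] at h1
      have h2 : (1:ℝ) ≤ k ^ α := Real.one_le_rpow hk1 hα.le
      nlinarith
    have hnum2 : ‖g (i:ℝ) - g (j:ℝ)‖ ^ 2 ≤ (A+B)^2 * (k ^ α) ^ 2 := by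
      rw [← mul_pow]
      exact pow_le_pow_left₀ (norm_nonneg _) hnum 2
    have hrw : (A+B)^2 * (k ^ α) ^ 2 / k ^ (2*n) = (A+B)^2 * k ^ (-p) := by
      rw [← Real.rpow_natCast (k ^ α) 2, ← Real.rpow_mul hk0.le,
        ← Real.rpow_natCast k (2*n), mul_div_assoc, ← Real.rpow_sub hk0]
      rw [hpdef]
      push_cast
      ring_nf
    calc ‖g (i:ℝ) - g (j:ℝ)‖ ^ 2 / ((i:ℝ)-(j:ℝ)) ^ (2*n)
        ≤ (A+B)^2 * (k ^ α) ^ 2 / k ^ (2*n) := by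
          rw [hden]; gcongr
      _ = (A+B)^2 * k ^ (-p) := hrw
  have step1 : ∑ j ∈ F, ‖g (i:ℝ) - g (j:ℝ)‖ ^ 2 / ((i:ℝ)-(j:ℝ)) ^ (2*n)
      ≤ (A+B)^2 * ∑ j ∈ F, (((i - j).natAbs : ℝ)) ^ (-p) := by
    rw [Finset.mul_sum]
    exact Finset.sum_le_sum key
  have split : ∑ j ∈ F, (((i - j).natAbs : ℝ)) ^ (-p)
      = ∑ j ∈ F.filter (fun j => j < i), (((i - j).natAbs : ℝ)) ^ (-p)
      + ∑ j ∈ F.filter (fun j => ¬ j < i), (((i - j).natAbs : ℝ)) ^ (-p) :=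
    (Finset.sum_filter_add_sum_filter_not F _ _).symm
  have bound_half : ∀ (G : Finset ℤ), (∀ x ∈ G, ∀ y ∈ G,
        (i - x).natAbs = (i - y).natAbs → x = y) → (∀ x ∈ G, x ≠ i) →
      ∑ j ∈ G, (((i - j).natAbs : ℝ)) ^ (-p) ≤ p / (p - 1) := by
    intro G hinj hne
    rw [← Finset.sum_image (f := fun k : ℕ => ((k:ℝ)) ^ (-p)) hinj]
    apply aux_sum_rpow_neg_le p hp1
    intro k hk
    simp only [Finset.mem_image] at hk
    obtain ⟨x, hx, rfl⟩ := hk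
    have := hne x hx
    omega
  have b1 : ∑ j ∈ F.filter (fun j => j < i), (((i - j).natAbs : ℝ)) ^ (-p) ≤ p / (p-1) := by
    apply bound_half
    · intro x hx y hy h
      simp only [Finset.mem_filter] at hx hy
      omega
    · intro x hx
      simp only [Finset.mem_filter] at hx
      omega
  have b2 : ∑ j ∈ F.filter (fun j => ¬ j < i), (((i - j).natAbs : ℝ)) ^ (-p) ≤ p / (p-1) := by
    apply bound_half
    · intro x hx y hy h
      simp only [Finset.mem_filter] at hx hy
      have hxne : x ≠ i := fun h' => hiF (h' ▸ hx.1)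
      have hyne : y ≠ i := fun h' => hiF (h' ▸ hy.1)
      omega
    · intro x hx
      simp only [Finset.mem_filter] at hx
      exact fun h' => hiF (h' ▸ hx.1)
  have final : (A+B)^2 * (p / (p-1) + p / (p-1))
      = 4 * (A + B) ^ 2 * ((n:ℝ) - α) / (2 * (n:ℝ) - 2 * α - 1) := by
    have hpne : p - 1 ≠ 0 := by linarith
    rw [hpdef] at hpne ⊢
    field_simp
    ring
  calc ∑ j ∈ F, ‖g (i:ℝ) - g (j:ℝ)‖ ^ 2 / ((i:ℝ)-(j:ℝ)) ^ (2*n)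
      ≤ (A+B)^2 * ∑ j ∈ F, (((i - j).natAbs : ℝ)) ^ (-p) := step1
    _ ≤ (A+B)^2 * (p / (p-1) + p / (p-1)) := by
        rw [split]
        exact mul_le_mul_of_nonneg_left (add_le_add b1 b2) (by positivity)
    _ = 4 * (A + B) ^ 2 * ((n:ℝ) - α) / (2 * (n:ℝ) - 2 * α - 1) := final
end

section
/- Let n and l be natural numbers with 1 ≤ l ≤ n + 1. Then ∑_{k = l−1}^{n} C(n, k) · C(k+1, l) ≤ 2^{n+1−l} · C(n+1, l), where C(m, r) denotes the binomial coefficient m choose r. -/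
/-- The combinatorial inequality from the proof of Theorem 5.9 of the paper. -/
theorem binomial_sum_inequality (n l : ℕ) (hl : 1 ≤ l) (hln : l ≤ n + 1) :
    ∑ k ∈ Finset.Icc (l - 1) n, n.choose k * (k + 1).choose l ≤
      2 ^ (n + 1 - l) * (n + 1).choose l := by
  have key : ∀ k ∈ Finset.Icc (l - 1) n, n.choose k * (k + 1).choose l ≤
      (n + 1).choose l * (n + 1 - l).choose (k + 1 - l) := by
    intro k hk
    obtain ⟨h1, h2⟩ := Finset.mem_Icc.mp hk
    have hlk : l ≤ k + 1 := by omega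
    calc n.choose k * (k + 1).choose l
        ≤ (n + 1).choose (k + 1) * (k + 1).choose l := by
          apply Nat.mul_le_mul_right
          rw [Nat.choose_succ_succ]
          exact Nat.le_add_right _ _
      _ = (n + 1).choose l * (n + 1 - l).choose (k + 1 - l) :=
          Nat.choose_mul hlk
  calc ∑ k ∈ Finset.Icc (l - 1) n, n.choose k * (k + 1).choose l
      ≤ ∑ k ∈ Finset.Icc (l - 1) n, (n + 1).choose l * (n + 1 - l).choose (k + 1 - l) :=
        Finset.sum_le_sum key
    _ = (n + 1).choose l * ∑ k ∈ Finset.Icc (l - 1) n, (n + 1 - l).choose (k + 1 - l) := by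
        rw [Finset.mul_sum]
    _ = 2 ^ (n + 1 - l) * (n + 1).choose l := by
        rw [← Finset.Ico_add_one_right_eq_Icc, Finset.sum_Ico_eq_sum_range]
        have h1 : n + 1 - (l - 1) = (n + 1 - l) + 1 := by omega
        rw [h1]
        have h2 : ∀ i, (l - 1 + i + 1 - l) = i := by intro i; omega
        simp only [h2]
        rw [Nat.sum_range_choose, Nat.mul_comm]
end

section
/- Let D be a bounded positive invertible operator on a complex Hilbert space H, let β > 0 be such that the spectrum of D is contained in [β, ∞), and let y be a bounded operator on H. Then ‖[log(D), y]‖ ≤ (1/β)^{1/3} · ( 8‖y‖ + 5‖[D, y]‖ ). -/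
set_option maxHeartbeats 1000000
set_option synthInstance.maxHeartbeats 1000000

open MeasureTheory Set Filter
open MeasureTheory Set Filter

-- tail integral
lemma aux_int_tail (c T : ℝ) (h : 0 < c + T) :
    IntegrableOn (fun t : ℝ => ((c + t)⁻¹)^2) (Ioi T) ∧
    ∫ t in Ioi T, ((c + t)⁻¹)^2 = (c + T)⁻¹ := by
  have hd : ∀ x ∈ Ici T, HasDerivAt (fun t : ℝ => -(c + t)⁻¹) (((c + x)⁻¹)^2) x := by
    intro x hx
    have hx' : T ≤ x := hx
    have hx0 : c + x ≠ 0 := by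
      have : (0:ℝ) < c + x := by linarith
      linarith
    have h1 : HasDerivAt (fun t : ℝ => c + t) 1 x := (hasDerivAt_id x).const_add c
    have h2 := (h1.inv hx0).neg
    refine h2.congr_deriv ?_
    rw [inv_pow]; ring
  have hlim : Tendsto (fun t : ℝ => -(c + t)⁻¹) atTop (nhds 0) := by
    have : Tendsto (fun t : ℝ => c + t) atTop atTop := tendsto_atTop_add_const_left _ _ tendsto_id
    simpa using (this.inv_tendsto_atTop).neg
  have hpos : ∀ x ∈ Ioi T, (0:ℝ) ≤ ((c + x)⁻¹)^2 := fun x _ => sq_nonneg _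
  refine ⟨integrableOn_Ioi_deriv_of_nonneg' hd hpos hlim, ?_⟩
  rw [integral_Ioi_of_hasDerivAt_of_nonneg' hd hpos hlim]
  simp

-- log representation
lemma aux_log_rep (l : ℝ) (hl : 0 < l) :
    ∫ t in Ioi (0:ℝ), ((1 + t)⁻¹ - (l + t)⁻¹) = Real.log l := by
  set m := min 1 l with hm
  have hm0 : 0 < m := lt_min one_pos hl
  have hd : ∀ x ∈ Ici (0:ℝ), HasDerivAt (fun t : ℝ => Real.log (1 + t) - Real.log (l + t))
      ((1 + x)⁻¹ - (l + x)⁻¹) x := by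
    intro x hx
    have hx0 : (0:ℝ) ≤ x := hx
    have h1 : (1 + x) ≠ 0 := by positivity
    have h2 : (l + x) ≠ 0 := by positivity
    have d1 : HasDerivAt (fun t : ℝ => Real.log (1 + t)) (1 + x)⁻¹ x := by
      simpa using (((hasDerivAt_id x).const_add 1).log h1)
    have d2 : HasDerivAt (fun t : ℝ => Real.log (l + t)) (l + x)⁻¹ x := by
      simpa using (((hasDerivAt_id x).const_add l).log h2)
    exact d1.sub d2
  have hint : IntegrableOn (fun t : ℝ => (1 + t)⁻¹ - (l + t)⁻¹) (Ioi (0:ℝ)) := by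
    have hb := (aux_int_tail m 0 (by simpa using hm0)).1
    refine Integrable.mono ((hb.const_mul |l - 1|)) ?_ ?_
    · refine (ContinuousOn.aestronglyMeasurable ?_ measurableSet_Ioi)
      intro x hx
      have hx0 : (0:ℝ) < x := hx
      refine ContinuousWithinAt.sub ?_ ?_ <;>
        exact (ContinuousWithinAt.inv₀
          ((continuous_const.add continuous_id).continuousWithinAt) (by positivity))
    · rw [ae_restrict_iff' measurableSet_Ioi]
      refine Eventually.of_forall fun x hx => ?_
      have hx0 : (0:ℝ) < x := hx
      have e1 : (1 + x)⁻¹ - (l + x)⁻¹ = (l - 1) * ((1+x)⁻¹ * (l+x)⁻¹) := by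
        field_simp
        ring
      rw [e1]
      simp only [Real.norm_eq_abs, abs_mul, abs_abs]
      have hm1 : m ≤ 1 := min_le_left _ _
      have hml : m ≤ l := min_le_right _ _
      have b1 : (1 + x)⁻¹ ≤ (m + x)⁻¹ := by
        apply inv_anti₀ (by positivity) (by linarith)
      have b2 : (l + x)⁻¹ ≤ (m + x)⁻¹ := by
        apply inv_anti₀ (by positivity) (by linarith)
      have p1 : (0:ℝ) < (1+x)⁻¹ := by positivity
      have p2 : (0:ℝ) < (l+x)⁻¹ := by positivity
      have hmm := mul_le_mul b1 b2 p2.le (by positivity)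
      rw [abs_of_nonneg p1.le, abs_of_nonneg p2.le,
        abs_of_nonneg (by positivity : (0:ℝ) ≤ (m+x)⁻¹^2)]
      nlinarith [abs_nonneg (l-1)]
  have hlim : Tendsto (fun t : ℝ => Real.log (1 + t) - Real.log (l + t)) atTop (nhds 0) := by
    have hratio : Tendsto (fun t : ℝ => (1 + t)/(l + t)) atTop (nhds 1) := by
      have h1 : Tendsto (fun t : ℝ => (1 - l)/(l + t)) atTop (nhds 0) :=
        tendsto_const_nhds.div_atTop (tendsto_atTop_add_const_left _ _ tendsto_id)
      have h2 : Tendsto (fun t : ℝ => 1 + (1 - l)/(l + t)) atTop (nhds 1) := by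
        simpa using (tendsto_const_nhds.add h1)
      refine h2.congr' ?_
      filter_upwards [eventually_gt_atTop (max 0 (-l))] with t ht
      have htl : 0 < l + t := by
        have := lt_of_le_of_lt (le_max_right 0 (-l)) ht; linarith
      field_simp
      ring
    have hcomp := ((Real.continuousAt_log one_ne_zero).tendsto.comp hratio)
    rw [Real.log_one] at hcomp
    refine hcomp.congr' ?_
    filter_upwards [eventually_gt_atTop (max 0 (-l))] with t ht
    have ht0 : 0 < 1 + t := by
      have := lt_of_le_of_lt (le_max_left 0 (-l)) ht; linarith
    have htl : 0 < l + t := by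
      have := lt_of_le_of_lt (le_max_right 0 (-l)) ht; linarith
    simp [Function.comp, Real.log_div ht0.ne' htl.ne']
  rw [integral_Ioi_of_hasDerivAt_of_tendsto' hd hint hlim]
  simp [Real.log_one]

-- Ioc integral of (c+t)⁻¹
lemma aux_int_Ioc (c T : ℝ) (hc : 0 < c) (hT : 0 ≤ T) :
    ∫ t in Ioc (0:ℝ) T, (c + t)⁻¹ = Real.log (c + T) - Real.log c := by
  rw [← intervalIntegral.integral_of_le hT]
  calc ∫ t in (0:ℝ)..T, (c + t)⁻¹ = ∫ t in (0:ℝ)..T, (fun u : ℝ => u⁻¹) (t + c) := by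
        simp [add_comm]
    _ = ∫ u in (0+c)..(T+c), u⁻¹ := intervalIntegral.integral_comp_add_right _ c
    _ = Real.log ((T+c)/(0+c)) := by
        apply integral_inv
        intro h
        rw [Set.mem_uIcc] at h
        rcases h with ⟨h1,h2⟩|⟨h1,h2⟩ <;> linarith
    _ = Real.log (c + T) - Real.log c := by
        rw [Real.log_div (by linarith) (by linarith)]
        ring_nf

/-- Part (i) of Theorem 6.2 of the paper (for a bounded positive invertible `D`
with spectrum contained in `[β, ∞)`, `β > 0`):
`‖[log(D), y]‖ ≤ (1/β)^{1/3}(8‖y‖ + 5‖[D,y]‖)`. -/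
theorem commutator_estimate_log_invertible
    {H : Type*} [NormedAddCommGroup H] [InnerProductSpace ℂ H] [CompleteSpace H]
    (D : H →L[ℂ] H) (hD : IsSelfAdjoint D)
    (β : ℝ) (hβ : 0 < β) (hspec : spectrum ℝ D ⊆ Set.Ici β)
    (y : H →L[ℂ] H) :
    ‖cfc Real.log D * y - y * cfc Real.log D‖ ≤
      (1 / β) ^ ((1 : ℝ) / 3) * (8 * ‖y‖ + 5 * ‖D * y - y * D‖) := by
  have hrpos : (0:ℝ) < (1 / β) ^ ((1:ℝ)/3) := Real.rpow_pos_of_pos (by positivity) _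
  rcases subsingleton_or_nontrivial H with hH | hH
  · have : Subsingleton (H →L[ℂ] H) := ⟨fun a b => ContinuousLinearMap.ext fun x => Subsingleton.elim _ _⟩
    rw [Subsingleton.elim (cfc Real.log D * y - y * cfc Real.log D) 0, norm_zero]
    positivity
  set S := spectrum ℝ D with hS
  have hSβ : ∀ l ∈ S, β ≤ l := fun l hl => hspec hl
  have hSM : ∀ l ∈ S, l ≤ ‖D‖ := fun l hl =>
    (le_abs_self l).trans (spectrum.norm_le_norm_of_mem hl)
  set M := ‖D‖ with hMdef
  have hM0 : (0:ℝ) ≤ M := norm_nonneg D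
  set μ := volume.restrict (Ioi (0:ℝ)) with hμ
  set f : ℝ → ℝ → ℝ := fun t l => (1+|t|)⁻¹ - (l+|t|)⁻¹ with hfdef
  set m := min 1 β with hmdef
  have hm0 : 0 < m := lt_min one_pos hβ
  have hm1 : m ≤ 1 := min_le_left _ _
  have hmβ : m ≤ β := min_le_right _ _
  set bound : ℝ → ℝ := fun t => (M+1) * ((m + |t|)⁻¹)^2 with hbd
  -- continuity of the uncurried restriction
  have hcont : Continuous (fun t => (S.restrict (f t))).uncurry := by
    have c1 : Continuous fun p : ℝ × S => (1 + |p.1|)⁻¹ := by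
      apply Continuous.inv₀ (by fun_prop)
      intro p; positivity
    have c2 : Continuous fun p : ℝ × S => ((p.2 : ℝ) + |p.1|)⁻¹ := by
      apply Continuous.inv₀ (by fun_prop)
      intro p
      refine ne_of_gt ?_
      have h1 := hSβ _ p.2.2
      have h2 := abs_nonneg p.1
      linarith
    exact c1.sub c2
  -- pointwise bound
  have hbound : ∀ t : ℝ, ∀ l ∈ S, ‖f t l‖ ≤ ‖bound t‖ := by
    intro t l hl
    have hβl := hSβ l hl
    have hlM := hSM l hl
    have h1 : (0:ℝ) < 1 + |t| := by positivity
    have h2 : (0:ℝ) < l + |t| := by have := abs_nonneg t; linarith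
    have h3 : (0:ℝ) < m + |t| := by positivity
    have e1 : f t l = (l - 1) * ((1+|t|)⁻¹ * (l+|t|)⁻¹) := by
      simp only [hfdef]; field_simp; ring
    have habs : |l - 1| ≤ M + 1 := abs_le.2 ⟨by linarith, by linarith⟩
    have b1 : (1 + |t|)⁻¹ ≤ (m + |t|)⁻¹ := inv_anti₀ h3 (by linarith)
    have b2 : (l + |t|)⁻¹ ≤ (m + |t|)⁻¹ := inv_anti₀ h3 (by linarith)
    have p1 : (0:ℝ) < (1+|t|)⁻¹ := by positivity
    have p2 : (0:ℝ) < (l+|t|)⁻¹ := by positivity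
    have p3 : (0:ℝ) < (m+|t|)⁻¹ := by positivity
    have hbnn : (0:ℝ) ≤ bound t := by positivity
    rw [e1, Real.norm_eq_abs, Real.norm_eq_abs, abs_mul, abs_of_nonneg hbnn,
      abs_of_nonneg (by positivity : (0:ℝ) ≤ (1+|t|)⁻¹ * (l+|t|)⁻¹)]
    have := mul_le_mul b1 b2 p2.le p3.le
    rw [hbd]
    nlinarith [abs_nonneg (l-1)]
  -- integrable bound
  have hbint : Integrable bound μ := by
    refine Integrable.congr (((aux_int_tail m 0 (by simpa using hm0)).1).const_mul (M+1)) ?_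
    rw [hμ, EventuallyEq, ae_restrict_iff' measurableSet_Ioi]
    refine Eventually.of_forall fun t ht => ?_
    have ht0 : (0:ℝ) < t := ht
    rw [hbd]
    simp [abs_of_pos ht0]
  have hbfi : HasFiniteIntegral bound μ := hbint.hasFiniteIntegral
  have key := cfc_integral (𝕜 := ℝ) (p := IsSelfAdjoint) (μ := μ) f bound D
    (by
      show ContinuousOn (fun p : ℝ × ℝ => (1+|p.1|)⁻¹ - (p.2+|p.1|)⁻¹) _
      refine ContinuousOn.sub (ContinuousOn.inv₀ (by fun_prop) fun p _ => by positivity)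
        (ContinuousOn.inv₀ (by fun_prop) fun p hp => ?_)
      exact ne_of_gt (by have := hSβ _ hp.2; have := abs_nonneg p.1; linarith))
    (Eventually.of_forall fun t z hz =>
      (hbound t z hz).trans_eq (Real.norm_of_nonneg (by simp only [hbd]; positivity)))
    hbfi hD
  -- resolvent family
  set R' : ℝ → (H →L[ℂ] H) := fun t => cfc (fun l : ℝ => (l + |t|)⁻¹) D with hR'
  have hcontR : ∀ t : ℝ, ContinuousOn (fun l : ℝ => (l + |t|)⁻¹) S := by
    intro t l hl
    have h1 := hSβ l hl
    have h2 := abs_nonneg t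
    exact ContinuousWithinAt.inv₀
      ((continuous_id.add continuous_const).continuousWithinAt) (ne_of_gt (by linarith))
  have hnormR : ∀ t : ℝ, ‖R' t‖ ≤ (β + |t|)⁻¹ := by
    intro t
    apply norm_cfc_le (by positivity)
    intro l hl
    have hβl := hSβ l hl
    have h2 : (0:ℝ) < l + |t| := by have := abs_nonneg t; linarith
    rw [Real.norm_eq_abs, abs_of_pos (by positivity)]
    exact inv_anti₀ (by positivity) (by linarith)
  have hcfcft : ∀ t : ℝ, cfc (f t) D = (1+|t|)⁻¹ • (1:H →L[ℂ] H) - R' t := by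
    intro t
    rw [show f t = fun l : ℝ => (fun _ : ℝ => (1+|t|)⁻¹) l - (fun l : ℝ => (l+|t|)⁻¹) l from rfl]
    rw [cfc_sub _ _ D (by fun_prop) (hcontR t), cfc_const _ _ hD,
      Algebra.algebraMap_eq_smul_one]
  -- inverse identities
  have hAt : ∀ t : ℝ, cfc (fun l : ℝ => l + |t|) D = D + algebraMap ℝ (H →L[ℂ] H) |t| := by
    intro t
    rw [show (fun l : ℝ => l + |t|) = fun l : ℝ => (id l + (fun _ : ℝ => |t|) l) from rfl]
    rw [cfc_add D id _ (by fun_prop) (by fun_prop), cfc_id ℝ D, cfc_const _ _ hD]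
  have hmul1 : ∀ t : ℝ, R' t * (D + algebraMap ℝ (H →L[ℂ] H) |t|) = 1 := by
    intro t
    rw [← hAt t, hR', ← cfc_mul _ _ D (hcontR t) (by fun_prop)]
    have heq : S.EqOn (fun l : ℝ => (l+|t|)⁻¹ * (l + |t|)) (fun _ : ℝ => (1:ℝ)) := by
      intro l hl
      have hβl := hSβ l hl
      have h2 : (0:ℝ) < l + |t| := by have := abs_nonneg t; linarith
      simp [inv_mul_cancel₀ h2.ne']
    rw [cfc_congr heq, cfc_const _ _ hD, map_one]
  have hmul2 : ∀ t : ℝ, (D + algebraMap ℝ (H →L[ℂ] H) |t|) * R' t = 1 := by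
    intro t
    rw [← hAt t, hR', ← cfc_mul _ _ D (by fun_prop) (hcontR t)]
    have heq : S.EqOn (fun l : ℝ => (l + |t|) * (l+|t|)⁻¹) (fun _ : ℝ => (1:ℝ)) := by
      intro l hl
      have hβl := hSβ l hl
      have h2 : (0:ℝ) < l + |t| := by have := abs_nonneg t; linarith
      simp [mul_inv_cancel₀ h2.ne']
    rw [cfc_congr heq, cfc_const _ _ hD, map_one]
  -- continuity of R'
  have hRcont : Continuous R' := by
    rw [Metric.continuous_iff]
    intro t ε hε
    refine ⟨ε * (β * β), by positivity, fun s hs => ?_⟩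
    have hdiff : ‖R' s - R' t‖ ≤ β⁻¹ * β⁻¹ * |s - t| := by
      rw [hR', ← cfc_sub _ _ D (hcontR s) (hcontR t)]
      apply norm_cfc_le (by positivity)
      intro l hl
      have hβl := hSβ l hl
      have h2 : (0:ℝ) < l + |s| := by have := abs_nonneg s; linarith
      have h3 : (0:ℝ) < l + |t| := by have := abs_nonneg t; linarith
      have e : (l+|s|)⁻¹ - (l+|t|)⁻¹ = (|t| - |s|) * ((l+|s|)⁻¹ * (l+|t|)⁻¹) := by
        field_simp
        ring
      rw [Real.norm_eq_abs, e, abs_mul, abs_mul]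
      have has := abs_nonneg s
      have hat := abs_nonneg t
      have i1 : |(l+|s|)⁻¹| ≤ β⁻¹ := by
        rw [abs_of_pos (by positivity)]; exact inv_anti₀ hβ (by linarith)
      have i2 : |(l+|t|)⁻¹| ≤ β⁻¹ := by
        rw [abs_of_pos (by positivity)]; exact inv_anti₀ hβ (by linarith)
      have i3 : |(|t| - |s|)| ≤ |s - t| := by
        rw [abs_sub_comm s t]
        exact abs_abs_sub_abs_le_abs_sub _ _
      calc |(|t| - |s|)| * (|(l+|s|)⁻¹| * |(l+|t|)⁻¹|)
          ≤ |s - t| * (β⁻¹ * β⁻¹) := by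
            apply mul_le_mul i3 (mul_le_mul i1 i2 (abs_nonneg _) (by positivity))
              (by positivity) (abs_nonneg _)
        _ = β⁻¹ * β⁻¹ * |s - t| := by ring
    rw [dist_eq_norm]
    calc ‖R' s - R' t‖ ≤ β⁻¹ * β⁻¹ * |s - t| := hdiff
      _ < β⁻¹ * β⁻¹ * (ε * (β * β)) := by
          apply mul_lt_mul_of_pos_left _ (by positivity)
          rwa [← Real.dist_eq]
      _ = ε := by field_simp
  -- integrability of F
  set F : ℝ → (H →L[ℂ] H) := fun t => cfc (f t) D with hFdef
  have hFcont : Continuous F := by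
    have : F = fun t => (1+|t|)⁻¹ • (1:H →L[ℂ] H) - R' t := funext hcfcft
    rw [this]
    have c0 : Continuous fun t : ℝ => (1+|t|)⁻¹ := by
      apply Continuous.inv₀ (by fun_prop)
      intro t; positivity
    exact (c0.smul continuous_const).sub hRcont
  have hFint : Integrable F μ := by
    refine hbint.mono' hFcont.aestronglyMeasurable ?_
    refine Eventually.of_forall fun t => ?_
    have hbnn : (0:ℝ) ≤ bound t := by rw [hbd]; positivity
    exact norm_cfc_le hbnn fun l hl => by
      simpa [abs_of_nonneg hbnn] using hbound t l hl
  -- the commutator map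
  set Φ : (H →L[ℂ] H) →L[ℝ] (H →L[ℂ] H) :=
    (ContinuousLinearMap.mul ℝ (H →L[ℂ] H)).flip y - ContinuousLinearMap.mul ℝ (H →L[ℂ] H) y
    with hΦdef
  have hΦ : ∀ z, Φ z = z * y - y * z := fun z => rfl
  -- main integral representation
  have hlog : cfc Real.log D = ∫ t, F t ∂μ := by
    rw [← key]
    apply cfc_congr
    intro l hl
    have hβl := hSβ l hl
    have hl0 : 0 < l := lt_of_lt_of_le hβ hβl
    have : ∫ t, f t l ∂μ = ∫ t in Ioi (0:ℝ), ((1+t)⁻¹ - (l+t)⁻¹) := by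
      rw [hμ]
      apply setIntegral_congr_fun measurableSet_Ioi
      intro t ht
      have ht0 : (0:ℝ) < t := ht
      simp [hfdef, abs_of_pos ht0]
    simp only [this, aux_log_rep l hl0]
  -- pointwise commutator bound
  set c : H →L[ℂ] H := D * y - y * D with hcdef
  set g : ℝ → ℝ := fun t => min (2*‖y‖*(β+t)⁻¹) (‖c‖*((β+t)⁻¹)^2) with hgdef
  have hcomm : ∀ t : ℝ, 0 < t → ‖Φ (F t)‖ ≤ g t := by
    intro t ht
    have habs : |t| = t := abs_of_pos ht
    have hΦF : Φ (F t) = -(R' t * y - y * R' t) := by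
      rw [hFdef]
      simp only [hcfcft t]
      rw [map_sub, hΦ, hΦ]
      simp [smul_mul_assoc, mul_smul_comm]
    have hb1 : ‖R' t * y - y * R' t‖ ≤ 2*‖y‖*(β+t)⁻¹ := by
      have h1 : ‖R' t * y‖ ≤ (β+t)⁻¹ * ‖y‖ := by
        calc ‖R' t * y‖ ≤ ‖R' t‖ * ‖y‖ := norm_mul_le _ _
          _ ≤ (β+t)⁻¹ * ‖y‖ := by
              apply mul_le_mul_of_nonneg_right _ (norm_nonneg _)
              simpa [habs] using hnormR t
      have h2 : ‖y * R' t‖ ≤ ‖y‖ * (β+t)⁻¹ := by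
        calc ‖y * R' t‖ ≤ ‖y‖ * ‖R' t‖ := norm_mul_le _ _
          _ ≤ ‖y‖ * (β+t)⁻¹ := by
              apply mul_le_mul_of_nonneg_left _ (norm_nonneg _)
              simpa [habs] using hnormR t
      calc ‖R' t * y - y * R' t‖ ≤ ‖R' t * y‖ + ‖y * R' t‖ := norm_sub_le _ _
        _ ≤ 2*‖y‖*(β+t)⁻¹ := by linarith
    have hb2 : ‖R' t * y - y * R' t‖ ≤ ‖c‖*((β+t)⁻¹)^2 := by
      set At := D + algebraMap ℝ (H →L[ℂ] H) |t| with hAtdef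
      have h1 : R' t * At = 1 := hmul1 t
      have h2 : At * R' t = 1 := hmul2 t
      have hcAt : y * At - At * y = -c := by
        rw [hAtdef, hcdef]
        rw [mul_add, add_mul, Algebra.commutes]
        abel
      have hid : R' t * y - y * R' t = R' t * (y * At - At * y) * R' t := by
        symm
        calc R' t * (y * At - At * y) * R' t
            = (R' t * (y * At)) * R' t - (R' t * (At * y)) * R' t := by
              rw [mul_sub, sub_mul]
          _ = R' t * y * (At * R' t) - (R' t * At) * (y * R' t) := by
              simp only [mul_assoc]
          _ = R' t * y - y * R' t := by rw [h1, h2, mul_one, one_mul]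
      rw [hid, hcAt]
      calc ‖R' t * (-c) * R' t‖ ≤ ‖R' t * (-c)‖ * ‖R' t‖ := norm_mul_le _ _
        _ ≤ ‖R' t‖ * ‖(-c)‖ * ‖R' t‖ :=
            mul_le_mul_of_nonneg_right (norm_mul_le _ _) (norm_nonneg _)
        _ ≤ (β+t)⁻¹ * ‖c‖ * (β+t)⁻¹ := by
            have hr := hnormR t
            rw [habs] at hr
            have hcn : ‖(-c)‖ = ‖c‖ := norm_neg _
            rw [hcn]
            apply mul_le_mul (mul_le_mul_of_nonneg_right hr (norm_nonneg _)) hr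
              (norm_nonneg _) (by positivity)
        _ = ‖c‖*((β+t)⁻¹)^2 := by ring
    rw [hΦF, norm_neg, hgdef]
    exact le_min hb1 hb2
  -- integrability of g
  have hc0 : (0:ℝ) ≤ ‖c‖ := norm_nonneg c
  have hy0 : (0:ℝ) ≤ ‖y‖ := norm_nonneg y
  have harm2 : Integrable (fun t => ‖c‖ * ((β+t)⁻¹)^2) μ :=
    ((aux_int_tail β 0 (by simpa using hβ)).1).const_mul ‖c‖
  have hgint : Integrable g μ := by
    have hgmeas : Measurable g := by
      have m1 : Measurable fun t : ℝ => 2*‖y‖*(β+t)⁻¹ :=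
        (measurable_const.mul ((measurable_const.add measurable_id).inv))
      have m2 : Measurable fun t : ℝ => ‖c‖*((β+t)⁻¹)^2 :=
        (measurable_const.mul (((measurable_const.add measurable_id).inv).pow_const 2))
      exact m1.min m2
    refine harm2.mono hgmeas.aestronglyMeasurable ?_
    rw [hμ, ae_restrict_iff' measurableSet_Ioi]
    refine Eventually.of_forall fun t ht => ?_
    have ht0 : (0:ℝ) < t := ht
    have hβt : (0:ℝ) < β + t := by linarith
    have g1 : (0:ℝ) ≤ g t := by
      rw [hgdef]
      apply le_min (by positivity) (by positivity)
    have g2 : g t ≤ ‖c‖*((β+t)⁻¹)^2 := min_le_right _ _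
    rw [Real.norm_eq_abs, Real.norm_eq_abs, abs_of_nonneg g1, abs_of_nonneg (by positivity)]
    exact g2
  -- splitting the integral
  have hsplit : ∀ T : ℝ, 0 ≤ T →
      ∫ t, g t ∂μ ≤ 2*‖y‖*(Real.log (β+T) - Real.log β) + ‖c‖ * (β+T)⁻¹ := by
    intro T hT
    have hgInt0 : IntegrableOn g (Ioi 0) := hgint
    have hgioc : IntegrableOn g (Ioc 0 T) := hgInt0.mono_set Ioc_subset_Ioi_self
    have hgioi : IntegrableOn g (Ioi T) := hgInt0.mono_set (Ioi_subset_Ioi hT)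
    have hdecomp : ∫ t, g t ∂μ = (∫ t in Ioc 0 T, g t) + ∫ t in Ioi T, g t := by
      rw [hμ, ← Ioc_union_Ioi_eq_Ioi hT,
        setIntegral_union Ioc_disjoint_Ioi_same measurableSet_Ioi hgioc hgioi]
    have h2int : IntegrableOn (fun t : ℝ => 2*‖y‖*(β+t)⁻¹) (Ioc 0 T) := by
      apply IntegrableOn.mono_set _ Ioc_subset_Icc_self
      apply ContinuousOn.integrableOn_Icc
      apply ContinuousOn.mul continuousOn_const
      intro x hx
      have hx1 : (0:ℝ) ≤ x := hx.1
      exact ContinuousWithinAt.inv₀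
        ((continuous_const.add continuous_id).continuousWithinAt)
        (ne_of_gt (by linarith))
    have e1 : (∫ t in Ioc 0 T, g t) ≤ 2*‖y‖*(Real.log (β+T) - Real.log β) := by
      calc (∫ t in Ioc 0 T, g t) ≤ ∫ t in Ioc 0 T, 2*‖y‖*(β+t)⁻¹ :=
            setIntegral_mono_on hgioc h2int measurableSet_Ioc fun x hx => min_le_left _ _
        _ = 2*‖y‖ * ∫ t in Ioc 0 T, (β+t)⁻¹ := by rw [integral_const_mul]
        _ = 2*‖y‖*(Real.log (β+T) - Real.log β) := by rw [aux_int_Ioc β T hβ hT]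
    have e2 : (∫ t in Ioi T, g t) ≤ ‖c‖ * (β+T)⁻¹ := by
      have htail := aux_int_tail β T (by linarith)
      calc (∫ t in Ioi T, g t) ≤ ∫ t in Ioi T, ‖c‖*((β+t)⁻¹)^2 :=
            setIntegral_mono_on hgioi (htail.1.const_mul ‖c‖) measurableSet_Ioi
              fun x hx => min_le_right _ _
        _ = ‖c‖ * ∫ t in Ioi T, ((β+t)⁻¹)^2 := by rw [integral_const_mul]
        _ = ‖c‖ * (β+T)⁻¹ := by rw [htail.2]
    rw [hdecomp]
    linarith
  -- the main norm estimate
  set r : ℝ := (1 / β) ^ ((1:ℝ)/3) with hrdef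
  have hmain : ∀ T : ℝ, 0 ≤ T →
      ‖cfc Real.log D * y - y * cfc Real.log D‖ ≤
        2*‖y‖*(Real.log (β+T) - Real.log β) + ‖c‖ * (β+T)⁻¹ := by
    intro T hT
    calc ‖cfc Real.log D * y - y * cfc Real.log D‖ = ‖Φ (cfc Real.log D)‖ := rfl
      _ = ‖∫ t, Φ (F t) ∂μ‖ := by
          rw [hlog, ContinuousLinearMap.integral_comp_comm Φ hFint]
      _ ≤ ∫ t, g t ∂μ := by
          apply norm_integral_le_of_norm_le hgint
          rw [hμ, ae_restrict_iff' measurableSet_Ioi]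
          exact Eventually.of_forall fun t ht => hcomm t ht
      _ ≤ _ := hsplit T hT
  -- numeric conclusion
  rcases le_or_gt 1 β with hβ1 | hβ1
  · have h0 := hmain 0 le_rfl
    simp only [add_zero, sub_self, mul_zero, zero_add] at h0
    have hβr : β⁻¹ ≤ r := by
      have h1 : (0:ℝ) < 1/β := by positivity
      have h2 : (1:ℝ)/β ≤ 1 := by
        rw [div_le_one (by linarith)]; linarith
      calc β⁻¹ = (1/β) ^ ((1:ℝ)) := by rw [Real.rpow_one]; ring
        _ ≤ (1/β) ^ ((1:ℝ)/3) := Real.rpow_le_rpow_of_exponent_ge h1 h2 (by norm_num)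
    calc ‖cfc Real.log D * y - y * cfc Real.log D‖ ≤ ‖c‖ * β⁻¹ := h0
      _ ≤ r * (8 * ‖y‖ + 5 * ‖c‖) := by nlinarith [mul_nonneg hy0 hrpos.le, mul_nonneg hc0 hrpos.le]
  · set T : ℝ := β ^ ((1:ℝ)/3) - β with hTdef
    have hβ13 : β ≤ β ^ ((1:ℝ)/3) := by
      calc β = β ^ ((1:ℝ)) := by rw [Real.rpow_one]
        _ ≤ β ^ ((1:ℝ)/3) := Real.rpow_le_rpow_of_exponent_ge hβ hβ1.le (by norm_num)
    have hT0 : 0 ≤ T := by rw [hTdef]; linarith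
    have hBT : β + T = β ^ ((1:ℝ)/3) := by rw [hTdef]; ring
    have hrinv : (β + T)⁻¹ = r := by
      rw [hBT, hrdef, Real.div_rpow zero_le_one hβ.le, Real.one_rpow]
      exact (one_div _).symm
    have hlogβT : Real.log (β+T) = (1/3) * Real.log β := by
      rw [hBT, Real.log_rpow hβ]
    have hlogr : Real.log r = (1/3) * (- Real.log β) := by
      rw [hrdef, Real.log_rpow (by positivity : (0:ℝ) < 1/β),
        Real.log_div one_ne_zero hβ.ne', Real.log_one]
      ring
    have hlogβneg : Real.log β < 0 := Real.log_neg hβ hβ1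
    have hr1 : Real.log r ≤ r - 1 := Real.log_le_sub_one_of_pos hrpos
    have hkey : -(Real.log β) ≤ 3*(r-1) := by linarith
    have h0 := hmain T hT0
    rw [hlogβT, hrinv] at h0
    calc ‖cfc Real.log D * y - y * cfc Real.log D‖
        ≤ 2*‖y‖*((1/3) * Real.log β - Real.log β) + ‖c‖ * r := h0
      _ ≤ r * (8 * ‖y‖ + 5 * ‖c‖) := by
          nlinarith [mul_le_mul_of_nonneg_left hkey hy0, mul_nonneg hy0 hrpos.le,
            mul_nonneg hc0 hrpos.le]
end

section
/- Let D be a bounded positive (self-adjoint, nonnegative) operator on a complex Hilbert space H whose spectrum is contained in {0} ∪ [β, ∞) for some β > 0, and let y be a bounded operator on H. Define g̃ : ℝ → ℝ by g̃(t) = log t for t > 0 and g̃(t) = 0 for t ≤ 0. Then ‖[g̃(D), y]‖ ≤ ( 8(1/β)^{1/3} + |log β| )·‖y‖ + 5(1/β)^{1/3}·‖[D, y]‖. -/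
set_option synthInstance.maxHeartbeats 1000000
set_option maxHeartbeats 2000000

open Real Finset

section Auxiliary

variable {H : Type*} [NormedAddCommGroup H] [InnerProductSpace ℂ H] [CompleteSpace H]


lemma comm_pow_bound {A : Type*} [NormedRing A] (B y : A) (n : ℕ) :
    ‖B^(n+1)*y - y*B^(n+1)‖ ≤ (n+1) * ‖B‖^n * ‖B*y - y*B‖ := by
  induction n with
  | zero => simp
  | succ n ih =>
    have hX : ‖B^(n+1)‖ ≤ ‖B‖^(n+1) := norm_pow_le' B (Nat.succ_pos n)
    have key : B^(n+1+1)*y - y*B^(n+1+1)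
        = B*(B^(n+1)*y - y*B^(n+1)) + (B*y - y*B)*B^(n+1) := by
      have e : B^(n+1+1) = B * B^(n+1) := pow_succ' B (n+1)
      rw [e]
      set X := B^(n+1)
      noncomm_ring
    rw [key]
    have h1 : ‖B*(B^(n+1)*y - y*B^(n+1))‖ ≤ ‖B‖ * ((n+1) * ‖B‖^n * ‖B*y - y*B‖) :=
      (norm_mul_le _ _).trans (by gcongr)
    have h2 : ‖(B*y - y*B)*B^(n+1)‖ ≤ ‖B*y - y*B‖ * ‖B‖^(n+1) :=
      (norm_mul_le _ _).trans (by gcongr)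
    calc ‖B*(B^(n+1)*y - y*B^(n+1)) + (B*y - y*B)*B^(n+1)‖
        ≤ ‖B*(B^(n+1)*y - y*B^(n+1))‖ + ‖(B*y - y*B)*B^(n+1)‖ := norm_add_le _ _
      _ ≤ ‖B‖ * ((n+1) * ‖B‖^n * ‖B*y - y*B‖) + ‖B*y - y*B‖ * ‖B‖^(n+1) :=
          add_le_add h1 h2
      _ = (↑(n+1)+1) * ‖B‖^(n+1) * ‖B*y - y*B‖ := by push_cast; ring

/-- Key series lemma: commutator bound for `log` of a positive invertible operator. -/
lemma comm_log_bound (A2 : H →L[ℂ] H) (hA : IsSelfAdjoint A2) (a b : ℝ)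
    (ha : 0 < a) (hab : a ≤ b) (hspec : spectrum ℝ A2 ⊆ Set.Icc a b)
    (y : H →L[ℂ] H) :
    ‖cfc Real.log A2 * y - y * cfc Real.log A2‖ ≤ a⁻¹ * ‖A2 * y - y * A2‖ := by
  have hb : 0 < b := ha.trans_le hab
  obtain ⟨q, hq⟩ : ∃ q : ℝ, q = 1 - a / b := ⟨_, rfl⟩
  have hab' : a / b ≤ 1 := (div_le_one hb).mpr hab
  have hab0 : 0 < a / b := div_pos ha hb
  have hq0 : 0 ≤ q := by linarith
  have hq1 : q < 1 := by linarith
  have h1q : 1 - q = a / b := by linarith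
  have h1q0 : 0 < 1 - q := by linarith
  -- the operator B = cfc (fun t => 1 - t/b)
  set g : ℝ → ℝ := fun t => 1 - t / b with hg_def
  have hgc : Continuous g := by fun_prop
  set B : H →L[ℂ] H := cfc g A2 with hB_def
  have hBsa : IsSelfAdjoint B := cfc_predicate g A2
  have hBnorm : ‖B‖ ≤ q := by
    apply norm_cfc_le hq0
    intro t ht
    obtain ⟨ht1, ht2⟩ := hspec ht
    rw [Real.norm_eq_abs, abs_le]
    have h2 : t / b ≤ 1 := (div_le_one hb).mpr ht2
    have h3 : a / b ≤ t / b := by gcongr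
    constructor
    · simp only [hg_def]; linarith
    · simp only [hg_def]; linarith
  -- B as an explicit operator expression
  have hBeq : B = algebraMap ℝ (H →L[ℂ] H) 1 - b⁻¹ • A2 := by
    rw [hB_def, hg_def]
    have : (fun t : ℝ => 1 - t / b) = fun t : ℝ => (fun _ : ℝ => (1:ℝ)) t - (fun s : ℝ => b⁻¹ * s) t := by
      ext t; rw [div_eq_inv_mul]
    rw [this, cfc_sub _ _ A2 (by fun_prop) (by fun_prop), cfc_const 1 A2,
      cfc_const_mul b⁻¹ (fun s : ℝ => s) A2 (by fun_prop), cfc_id' ℝ A2]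
  -- commutator of B with y
  have hBy : B * y - y * B = -(b⁻¹ • (A2 * y - y * A2)) := by
    rw [hBeq, map_one]
    simp only [sub_mul, mul_sub, one_mul, mul_one, smul_mul_assoc, mul_smul_comm, smul_sub]
    abel
  have hBynorm : ‖B * y - y * B‖ = b⁻¹ * ‖A2 * y - y * A2‖ := by
    rw [hBy, norm_neg, norm_smul, Real.norm_eq_abs, abs_of_pos (by positivity)]
  have hgmem : ∀ t ∈ spectrum ℝ A2, 0 ≤ g t ∧ g t ≤ q := by
    intro t ht
    obtain ⟨ht1, ht2⟩ := hspec ht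
    have h2 : t / b ≤ 1 := (div_le_one hb).mpr ht2
    have h3 : a / b ≤ t / b := by gcongr
    constructor
    · simp only [hg_def]; linarith
    · simp only [hg_def]; linarith
  have hlogc : ContinuousOn Real.log (spectrum ℝ A2) := by
    apply Real.continuousOn_log.mono
    intro t ht
    have := (hspec ht).1
    simp only [Set.mem_compl_iff, Set.mem_singleton_iff]
    intro h; rw [h] at this; linarith
  -- the main estimate for each N
  have main : ∀ N : ℕ, ‖cfc Real.log A2 * y - y * cfc Real.log A2‖ ≤
      a⁻¹ * ‖A2 * y - y * A2‖ + (2 * ‖y‖ / (1 - q)) * q ^ (N + 1) := by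
    intro N
    set pN : ℝ → ℝ := fun t => Real.log b - ∑ i ∈ Finset.range N, ((i : ℝ) + 1)⁻¹ * (g t) ^ (i + 1)
      with hpN_def
    have hpNc : Continuous pN := by
      rw [hpN_def]; fun_prop
    -- cfc pN A2 as an explicit operator
    have hcfc_pN : cfc pN A2 =
        algebraMap ℝ (H →L[ℂ] H) (Real.log b)
          - ∑ i ∈ Finset.range N, ((i : ℝ) + 1)⁻¹ • B ^ (i + 1) := by
      rw [hpN_def]
      rw [cfc_sub (fun _ => Real.log b)
        (fun t => ∑ i ∈ Finset.range N, ((i : ℝ) + 1)⁻¹ * (g t) ^ (i + 1)) A2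
        (by fun_prop) (by fun_prop), cfc_const _ A2]
      congr 1
      have e : (fun t : ℝ => ∑ i ∈ Finset.range N, ((i : ℝ) + 1)⁻¹ * (g t) ^ (i + 1))
          = ∑ i ∈ Finset.range N, (fun t : ℝ => ((i : ℝ) + 1)⁻¹ * (g t) ^ (i + 1)) := by
        ext t; simp
      rw [e, cfc_sum _ A2 _ (fun i _ => by fun_prop)]
      refine Finset.sum_congr rfl fun i _ => ?_
      rw [cfc_const_mul _ _ A2 (by fun_prop), cfc_pow g (i+1) A2 (by fun_prop)]
    -- error estimate
    have herr : ‖cfc Real.log A2 - cfc pN A2‖ ≤ q ^ (N + 1) / (1 - q) := by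
      rw [← cfc_sub Real.log pN A2 hlogc (by fun_prop)]
      apply norm_cfc_le (by positivity)
      intro t ht
      obtain ⟨hz0, hzq⟩ := hgmem t ht
      have ht1 := (hspec ht).1
      have ht0 : 0 < t := lt_of_lt_of_le ha ht1
      have habs : |g t| < 1 := by rw [abs_of_nonneg hz0]; linarith
      have h1 : Real.log t - pN t
          = (∑ i ∈ Finset.range N, (g t) ^ (i + 1) / ((i : ℕ) + 1 : ℝ)) + Real.log (1 - g t) := by
        have e1 : 1 - g t = t / b := by simp only [hg_def]; ring
        rw [hpN_def, e1, Real.log_div (ne_of_gt ht0) (ne_of_gt hb)]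
        have e2 : ∀ i ∈ Finset.range N,
            (g t) ^ (i + 1) / ((i : ℕ) + 1 : ℝ) = ((i : ℝ) + 1)⁻¹ * (g t) ^ (i + 1) := by
          intro i _; rw [div_eq_inv_mul]
        rw [Finset.sum_congr rfl e2]
        ring
      rw [Real.norm_eq_abs, h1]
      calc |(∑ i ∈ Finset.range N, (g t) ^ (i + 1) / ((i : ℕ) + 1 : ℝ)) + Real.log (1 - g t)|
          ≤ |g t| ^ (N + 1) / (1 - |g t|) := by
            have := abs_log_sub_add_sum_range_le habs N
            convert this using 3
        _ ≤ q ^ (N + 1) / (1 - q) := by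
            rw [abs_of_nonneg hz0]
            exact div_le_div₀ (by positivity) (pow_le_pow_left₀ hz0 hzq _) h1q0 (by linarith)
    -- commutator bound for the polynomial part
    have hSN : ‖cfc pN A2 * y - y * cfc pN A2‖ ≤ (1 - q)⁻¹ * (b⁻¹ * ‖A2 * y - y * A2‖) := by
      rw [hcfc_pN]
      have hcomm : (algebraMap ℝ (H →L[ℂ] H) (Real.log b)
            - ∑ i ∈ Finset.range N, ((i : ℝ) + 1)⁻¹ • B ^ (i + 1)) * y
          - y * (algebraMap ℝ (H →L[ℂ] H) (Real.log b)
            - ∑ i ∈ Finset.range N, ((i : ℝ) + 1)⁻¹ • B ^ (i + 1))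
          = - ∑ i ∈ Finset.range N, ((i : ℝ) + 1)⁻¹ • (B ^ (i + 1) * y - y * B ^ (i + 1)) := by
        have hc : algebraMap ℝ (H →L[ℂ] H) (Real.log b) * y
            = y * algebraMap ℝ (H →L[ℂ] H) (Real.log b) := (Algebra.commutes _ _)
        rw [sub_mul, mul_sub, hc, Finset.sum_mul, Finset.mul_sum,
          sub_sub_sub_cancel_left, ← Finset.sum_sub_distrib]
        have e : ∀ i ∈ Finset.range N,
            y * (((i : ℝ) + 1)⁻¹ • B ^ (i + 1)) - (((i : ℝ) + 1)⁻¹ • B ^ (i + 1)) * y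
            = -(((i : ℝ) + 1)⁻¹ • (B ^ (i + 1) * y - y * B ^ (i + 1))) := by
          intro i _
          simp only [mul_smul_comm, smul_mul_assoc, smul_sub]
          abel
        rw [Finset.sum_congr rfl e, Finset.sum_neg_distrib]
      rw [hcomm, norm_neg]
      calc ‖∑ i ∈ Finset.range N, ((i : ℝ) + 1)⁻¹ • (B ^ (i + 1) * y - y * B ^ (i + 1))‖
          ≤ ∑ i ∈ Finset.range N, ‖((i : ℝ) + 1)⁻¹ • (B ^ (i + 1) * y - y * B ^ (i + 1))‖ :=
            norm_sum_le _ _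
        _ ≤ ∑ i ∈ Finset.range N, q ^ i * ‖B * y - y * B‖ := by
            refine Finset.sum_le_sum fun i _ => ?_
            rw [norm_smul, Real.norm_eq_abs, abs_of_pos (by positivity)]
            have h1 : ‖B ^ (i + 1) * y - y * B ^ (i + 1)‖
                ≤ ((i : ℝ) + 1) * ‖B‖ ^ i * ‖B * y - y * B‖ := by
              have := comm_pow_bound B y i
              push_cast at this ⊢
              exact this
            have h2 : ((i : ℝ) + 1) * ‖B‖ ^ i * ‖B * y - y * B‖
                ≤ ((i : ℝ) + 1) * q ^ i * ‖B * y - y * B‖ := by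
              have := norm_nonneg B
              gcongr
            calc ((i : ℝ) + 1)⁻¹ * ‖B ^ (i + 1) * y - y * B ^ (i + 1)‖
                ≤ ((i : ℝ) + 1)⁻¹ * (((i : ℝ) + 1) * q ^ i * ‖B * y - y * B‖) := by
                  gcongr
                  exact h1.trans h2
              _ = q ^ i * ‖B * y - y * B‖ := by
                  field_simp
        _ ≤ (1 - q)⁻¹ * ‖B * y - y * B‖ := by
            rw [← Finset.sum_mul]
            have hgeom : ∑ i ∈ Finset.range N, q ^ i ≤ (1 - q)⁻¹ := by
              rw [geom_sum_eq (by linarith : q ≠ 1)]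
              have e : (q ^ N - 1) / (q - 1) = (1 - q ^ N) / (1 - q) := by
                rw [← neg_div_neg_eq]; ring_nf
              have hqN : 0 ≤ q ^ N := by positivity
              rw [e, inv_eq_one_div]
              exact div_le_div₀ (by norm_num) (by linarith) h1q0 le_rfl
            exact mul_le_mul_of_nonneg_right hgeom (norm_nonneg _)
        _ = (1 - q)⁻¹ * (b⁻¹ * ‖A2 * y - y * A2‖) := by rw [hBynorm]
    -- combine
    set X := cfc Real.log A2
    set S := cfc pN A2
    have hsplit : X * y - y * X = (S * y - y * S) + ((X - S) * y - y * (X - S)) := by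
      noncomm_ring
    rw [hsplit]
    have hE : ‖(X - S) * y - y * (X - S)‖ ≤ 2 * (q ^ (N + 1) / (1 - q)) * ‖y‖ := by
      calc ‖(X - S) * y - y * (X - S)‖ ≤ ‖(X - S) * y‖ + ‖y * (X - S)‖ := norm_sub_le _ _
        _ ≤ ‖X - S‖ * ‖y‖ + ‖y‖ * ‖X - S‖ := add_le_add (norm_mul_le _ _) (norm_mul_le _ _)
        _ ≤ (q ^ (N + 1) / (1 - q)) * ‖y‖ + ‖y‖ * (q ^ (N + 1) / (1 - q)) := by
            gcongr <;> exact herr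
        _ = 2 * (q ^ (N + 1) / (1 - q)) * ‖y‖ := by ring
    have ha_eq : (1 - q)⁻¹ * b⁻¹ = a⁻¹ := by
      rw [h1q]
      field_simp
    calc ‖(S * y - y * S) + ((X - S) * y - y * (X - S))‖
        ≤ ‖S * y - y * S‖ + ‖(X - S) * y - y * (X - S)‖ := norm_add_le _ _
      _ ≤ (1 - q)⁻¹ * (b⁻¹ * ‖A2 * y - y * A2‖) + 2 * (q ^ (N + 1) / (1 - q)) * ‖y‖ :=
          add_le_add hSN hE
      _ = a⁻¹ * ‖A2 * y - y * A2‖ + (2 * ‖y‖ / (1 - q)) * q ^ (N + 1) := by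
          rw [← mul_assoc, ha_eq]; ring
  -- take the limit N → ∞
  have hlim : Filter.Tendsto
      (fun N : ℕ => a⁻¹ * ‖A2 * y - y * A2‖ + (2 * ‖y‖ / (1 - q)) * q ^ (N + 1))
      Filter.atTop (nhds (a⁻¹ * ‖A2 * y - y * A2‖ + (2 * ‖y‖ / (1 - q)) * 0)) := by
    apply Filter.Tendsto.const_add
    apply Filter.Tendsto.const_mul
    exact (tendsto_pow_atTop_nhds_zero_of_lt_one hq0 hq1).comp (Filter.tendsto_add_atTop_nat 1)
  have := ge_of_tendsto' hlim main
  simpa using this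


lemma numeric1 (β : ℝ) (hβ : 0 < β) :
    (min β 1 + β ^ ((1:ℝ)/3))⁻¹ ≤ 5 * (1/β) ^ ((1:ℝ)/3) := by
  have hT : 0 < β ^ ((1:ℝ)/3) := Real.rpow_pos_of_pos hβ _
  have hu : (1/β) ^ ((1:ℝ)/3) = (β ^ ((1:ℝ)/3))⁻¹ := by
    rw [one_div, Real.inv_rpow hβ.le]
  rw [hu]
  have h1 : (min β 1 + β ^ ((1:ℝ)/3))⁻¹ ≤ (β ^ ((1:ℝ)/3))⁻¹ := by
    apply inv_anti₀ hT
    have : 0 < min β 1 := lt_min hβ one_pos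
    linarith
  have h2 : (0:ℝ) ≤ (β ^ ((1:ℝ)/3))⁻¹ := by positivity
  linarith

lemma numeric2 (β : ℝ) (hβ : 0 < β) :
    2 * Real.log (1 + β ^ ((1:ℝ)/3) / min β 1) + 2 * (min β 1 + β ^ ((1:ℝ)/3))⁻¹
      ≤ 8 * (1/β) ^ ((1:ℝ)/3) + |Real.log β| := by
  set T := β ^ ((1:ℝ)/3) with hT_def
  have hT : 0 < T := Real.rpow_pos_of_pos hβ _
  have hu : (1/β) ^ ((1:ℝ)/3) = T⁻¹ := by
    rw [one_div, Real.inv_rpow hβ.le]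
  have hT3 : T ^ (3:ℕ) = β := by
    rw [hT_def, ← Real.rpow_natCast (β ^ ((1:ℝ)/3)) 3, ← Real.rpow_mul hβ.le]
    norm_num
  have hlogT : Real.log T = (1/3) * Real.log β := by
    rw [hT_def, Real.log_rpow hβ]
  rcases le_or_gt β 1 with hβ1 | hβ1
  · -- case β ≤ 1
    have hmin : min β 1 = β := min_eq_left hβ1
    have hT1 : T ≤ 1 := Real.rpow_le_one hβ.le hβ1 (by norm_num)
    set v := T⁻¹ with hv_def
    have hv1 : 1 ≤ v := (one_le_inv₀ hT).mpr hT1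
    have hv0 : 0 < v := by linarith
    have hTv : T = v⁻¹ := by rw [hv_def, inv_inv]
    have hlogβ : |Real.log β| = 3 * Real.log v := by
      have h1 : Real.log β ≤ 0 := Real.log_nonpos hβ.le hβ1
      have h2 : Real.log v = - Real.log T := by rw [hv_def, Real.log_inv]
      rw [abs_of_nonpos h1, h2, hlogT]; ring
    have hdiv : T / β = v ^ (2:ℕ) := by
      rw [← hT3, hv_def]
      field_simp
    have hv2 : 1 + v ^ (2:ℕ) ≤ 2 * v ^ (2:ℕ) := by nlinarith
    have hlog1 : Real.log (1 + T / β) ≤ Real.log 2 + 2 * Real.log v := by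
      rw [hdiv]
      calc Real.log (1 + v ^ (2:ℕ)) ≤ Real.log (2 * v ^ (2:ℕ)) := by
            apply Real.log_le_log (by positivity) hv2
        _ = Real.log 2 + 2 * Real.log v := by
            rw [Real.log_mul (by norm_num) (by positivity), Real.log_pow]
            push_cast; ring
    have hinv : (β + T)⁻¹ ≤ v := by
      calc (β + T)⁻¹ ≤ T⁻¹ := inv_anti₀ hT (by linarith)
        _ = v := rfl
    have hlogv : Real.log v ≤ v - 1 := Real.log_le_sub_one_of_pos hv0
    have hlog2 : Real.log 2 ≤ 1 := by
      have := Real.log_le_sub_one_of_pos (by norm_num : (0:ℝ) < 2)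
      linarith
    rw [hu, hlogβ, hmin]
    have hlogv0 : 0 ≤ Real.log v := Real.log_nonneg hv1
    nlinarith [hlog1, hinv]
  · -- case 1 < β
    have hmin : min β 1 = 1 := min_eq_right hβ1.le
    have hT1 : 1 ≤ T := Real.one_le_rpow hβ1.le (by norm_num)
    have hlogβ : |Real.log β| = 3 * Real.log T := by
      rw [abs_of_nonneg (Real.log_nonneg hβ1.le), hlogT]; ring
    have hlog1 : Real.log (1 + T / 1) ≤ Real.log 2 + Real.log T := by
      rw [div_one]
      calc Real.log (1 + T) ≤ Real.log (2 * T) := Real.log_le_log (by linarith) (by linarith)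
        _ = Real.log 2 + Real.log T := Real.log_mul (by norm_num) (by linarith)
    have hinv : (1 + T)⁻¹ ≤ 2⁻¹ := by
      apply inv_anti₀ (by norm_num)
      linarith
    have hkey : 1 + 3 * Real.log 2 ≤ 8 / T + Real.log T := by
      have h8 : Real.log (8 / T) ≤ 8 / T - 1 := Real.log_le_sub_one_of_pos (by positivity)
      have h8' : Real.log (8 / T) = Real.log 8 - Real.log T := Real.log_div (by norm_num) (by linarith)
      have h83 : Real.log 8 = 3 * Real.log 2 := by
        rw [show (8:ℝ) = 2 ^ (3:ℕ) by norm_num, Real.log_pow]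
        push_cast; ring
      rw [h8', h83] at h8
      linarith
    have hlog2 : 0 ≤ Real.log 2 := Real.log_nonneg (by norm_num)
    rw [hu, hlogβ, hmin]
    have h8T : 8 / T = 8 * T⁻¹ := by ring
    nlinarith [hlog1, hinv, hkey]

end Auxiliary

/-- Part (ii) of Theorem 6.2 of the paper (for a bounded positive `D` whose
spectrum is contained in `{0} ∪ [β, ∞)`):
`‖[log̃(D), y]‖ ≤ (8(1/β)^{1/3} + |log β|)‖y‖ + 5(1/β)^{1/3}‖[D,y]‖`, where
`log̃(t) = log t` for `t > 0` and `log̃(t) = 0` for `t ≤ 0`. -/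
theorem commutator_estimate_log_noninvertible
    {H : Type*} [NormedAddCommGroup H] [InnerProductSpace ℂ H] [CompleteSpace H]
    (D : H →L[ℂ] H) (hD : IsSelfAdjoint D) (hDpos : 0 ≤ D)
    (β : ℝ) (hβ : 0 < β) (hspec : spectrum ℝ D ⊆ {0} ∪ Set.Ici β)
    (y : H →L[ℂ] H) :
    ‖cfc (fun t : ℝ => if 0 < t then Real.log t else 0) D * y -
        y * cfc (fun t : ℝ => if 0 < t then Real.log t else 0) D‖ ≤
      (8 * (1 / β) ^ ((1 : ℝ) / 3) + |Real.log β|) * ‖y‖ +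
        5 * (1 / β) ^ ((1 : ℝ) / 3) * ‖D * y - y * D‖ := by
  rcases subsingleton_or_nontrivial H with hs | hnt
  · have h0 : cfc (fun t : ℝ => if 0 < t then Real.log t else 0) D * y -
        y * cfc (fun t : ℝ => if 0 < t then Real.log t else 0) D = 0 := Subsingleton.elim _ _
    rw [h0, norm_zero]
    positivity
  set f0 : ℝ → ℝ := fun t => if 0 < t then Real.log t else 0 with hf0_def
  set β' : ℝ := min β 1 with hβ'_def
  set M : ℝ := max ‖D‖ 1 with hM_def
  set T : ℝ := β ^ ((1:ℝ)/3) with hT_def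
  have hβ'0 : 0 < β' := lt_min hβ one_pos
  have hβ'1 : β' ≤ 1 := min_le_right _ _
  have hM1 : 1 ≤ M := le_max_right _ _
  have hβ'M : β' ≤ M := hβ'1.trans hM1
  have hT0 : 0 < T := Real.rpow_pos_of_pos hβ _
  have hβ2 : 0 < β / 2 := by linarith
  have hupper : ∀ t ∈ spectrum ℝ D, t ≤ M := by
    intro t ht
    calc t ≤ |t| := le_abs_self t
      _ = ‖t‖ := (Real.norm_eq_abs t).symm
      _ ≤ ‖D‖ := spectrum.norm_le_norm_of_mem ht
      _ ≤ M := le_max_left _ _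
  -- the auxiliary function h
  set h : ℝ → ℝ := fun t => if t < β/2 then 1 else t with hh_def
  have hh_cont : ContinuousOn h (spectrum ℝ D) := by
    intro t ht
    rcases hspec ht with h0 | hβt
    · rw [Set.mem_singleton_iff] at h0
      subst h0
      have hev : h =ᶠ[nhds (0:ℝ)] (fun _ => (1:ℝ)) := by
        filter_upwards [Iio_mem_nhds hβ2] with s hs
        rw [Set.mem_Iio] at hs
        simp only [hh_def]
        rw [if_pos hs]
      exact (continuousAt_const.congr hev.symm).continuousWithinAt
    · rw [Set.mem_Ici] at hβt
      have hev : h =ᶠ[nhds t] (fun s => s) := by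
        filter_upwards [Ioi_mem_nhds (show β/2 < t by linarith)] with s hs
        rw [Set.mem_Ioi] at hs
        simp only [hh_def]
        rw [if_neg (not_lt.2 (le_of_lt hs))]
      exact (continuousAt_id.congr hev.symm).continuousWithinAt
  have hh_spec : ∀ t ∈ spectrum ℝ D, h t ∈ Set.Icc β' M := by
    intro t ht
    rcases hspec ht with h0 | hβt
    · rw [Set.mem_singleton_iff] at h0
      subst h0
      simp only [hh_def]
      rw [if_pos hβ2]
      exact ⟨hβ'1, hM1⟩
    · rw [Set.mem_Ici] at hβt
      simp only [hh_def]
      rw [if_neg (not_lt.2 (by linarith))]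
      exact ⟨le_trans (min_le_left _ _) hβt, hupper t ht⟩
  -- D' = cfc h D
  set D' : H →L[ℂ] H := cfc h D with hD'_def
  have hD'sa : IsSelfAdjoint D' := cfc_predicate h D
  have hspecD' : spectrum ℝ D' ⊆ Set.Icc β' M := by
    rw [hD'_def, cfc_map_spectrum h D hD hh_cont]
    rintro - ⟨t, ht, rfl⟩
    exact hh_spec t ht
  -- cfc f0 D = cfc log D'
  have hgt_eq : cfc f0 D = cfc Real.log D' := by
    have e1 : cfc f0 D = cfc (Real.log ∘ h) D := by
      apply cfc_congr
      intro t ht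
      rcases hspec ht with h0 | hβt
      · rw [Set.mem_singleton_iff] at h0
        subst h0
        simp only [hf0_def, hh_def, Function.comp_apply]
        rw [if_neg (lt_irrefl 0), if_pos hβ2, Real.log_one]
      · rw [Set.mem_Ici] at hβt
        simp only [hf0_def, hh_def, Function.comp_apply]
        rw [if_pos (by linarith : (0:ℝ) < t), if_neg (not_lt.2 (by linarith))]
    have e2 : ContinuousOn Real.log (h '' spectrum ℝ D) := by
      apply Real.continuousOn_log.mono
      rintro - ⟨t, ht, rfl⟩
      have := (hh_spec t ht).1
      simp only [Set.mem_compl_iff, Set.mem_singleton_iff]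
      intro hc
      rw [hc] at this; linarith
    rw [e1, cfc_comp Real.log h D hD e2 hh_cont]
  -- the perturbation E = D' - D
  have hE : D' - D = cfc (fun t => h t - t) D := by
    have e := cfc_sub h (fun t : ℝ => t) D hh_cont (by fun_prop)
    rw [cfc_id' ℝ D] at e
    rw [hD'_def, ← e]
  have hEnorm : ‖D' - D‖ ≤ 1 := by
    rw [hE]
    apply norm_cfc_le zero_le_one
    intro t ht
    rcases hspec ht with h0 | hβt
    · rw [Set.mem_singleton_iff] at h0
      subst h0
      simp only [hh_def]
      rw [if_pos hβ2]
      norm_num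
    · rw [Set.mem_Ici] at hβt
      simp only [hh_def]
      rw [if_neg (not_lt.2 (by linarith))]
      simp
  have hcommD' : ‖D' * y - y * D'‖ ≤ ‖D * y - y * D‖ + 2 * ‖y‖ := by
    have hsplit : D' * y - y * D' = (D * y - y * D) + ((D' - D) * y - y * (D' - D)) := by
      noncomm_ring
    rw [hsplit]
    have h1 : ‖(D' - D) * y - y * (D' - D)‖ ≤ 2 * ‖y‖ := by
      calc ‖(D' - D) * y - y * (D' - D)‖ ≤ ‖(D' - D) * y‖ + ‖y * (D' - D)‖ := norm_sub_le _ _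
        _ ≤ ‖D' - D‖ * ‖y‖ + ‖y‖ * ‖D' - D‖ := add_le_add (norm_mul_le _ _) (norm_mul_le _ _)
        _ ≤ 1 * ‖y‖ + ‖y‖ * 1 := by
            have := norm_nonneg y
            gcongr
        _ = 2 * ‖y‖ := by ring
    calc ‖(D * y - y * D) + ((D' - D) * y - y * (D' - D))‖
        ≤ ‖D * y - y * D‖ + ‖(D' - D) * y - y * (D' - D)‖ := norm_add_le _ _
      _ ≤ ‖D * y - y * D‖ + 2 * ‖y‖ := by linarith
  -- splitting the logarithm
  have hc1 : ContinuousOn (fun t : ℝ => Real.log (t + T)) (spectrum ℝ D') := by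
    intro t ht
    have ht1 := (hspecD' ht).1
    have ht0 : 0 < t := lt_of_lt_of_le hβ'0 ht1
    have hne : t + T ≠ 0 := by intro hc; nlinarith
    have hca : ContinuousAt (fun s : ℝ => s + T) t := by fun_prop
    exact (hca.log hne).continuousWithinAt
  have hc2 : ContinuousOn (fun t : ℝ => Real.log ((t + T) / t)) (spectrum ℝ D') := by
    intro t ht
    have ht1 := (hspecD' ht).1
    have ht0 : 0 < t := lt_of_lt_of_le hβ'0 ht1
    have hinner : ContinuousAt (fun t : ℝ => (t + T) / t) t :=
      ContinuousAt.div (by fun_prop) (by fun_prop) (ne_of_gt ht0)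
    have hne : (t + T) / t ≠ 0 := ne_of_gt (div_pos (by linarith) ht0)
    exact (ContinuousAt.log hinner hne).continuousWithinAt
  have hsplitlog : cfc Real.log D'
      = cfc (fun t => Real.log (t + T)) D' - cfc (fun t => Real.log ((t + T) / t)) D' := by
    rw [← cfc_sub _ _ D' hc1 hc2]
    apply cfc_congr
    intro t ht
    have ht0 : 0 < t := lt_of_lt_of_le hβ'0 (hspecD' ht).1
    simp only
    rw [Real.log_div (by positivity) (ne_of_gt ht0)]
    ring
  -- the shifted operator A2
  set A2 : H →L[ℂ] H := cfc (fun t : ℝ => t + T) D' with hA2_def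
  have hA2sa : IsSelfAdjoint A2 := cfc_predicate _ _
  have hcompA2 : cfc (fun t : ℝ => Real.log (t + T)) D' = cfc Real.log A2 := by
    rw [hA2_def, ← cfc_comp' Real.log (fun t : ℝ => t + T) D' ?_ (by fun_prop)]
    apply Real.continuousOn_log.mono
    rintro - ⟨t, ht, rfl⟩
    have ht1 := (hspecD' ht).1
    simp only [Set.mem_compl_iff, Set.mem_singleton_iff]
    intro hc
    have : 0 < t + T := by linarith
    rw [hc] at this; linarith
  have hspecA2 : spectrum ℝ A2 ⊆ Set.Icc (β' + T) (M + T) := by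
    rw [hA2_def, cfc_map_spectrum _ D' hD'sa (by fun_prop)]
    rintro - ⟨t, ht, rfl⟩
    obtain ⟨h1, h2⟩ := hspecD' ht
    exact ⟨by simp only; linarith, by simp only; linarith⟩
  have hA2comm : A2 * y - y * A2 = D' * y - y * D' := by
    have e : A2 = D' + algebraMap ℝ (H →L[ℂ] H) T := by
      rw [hA2_def, cfc_add_const T (fun t : ℝ => t) D' (by fun_prop) hD'sa, cfc_id' ℝ D']
    rw [e, add_mul, mul_add, Algebra.commutes]
    abel
  have hmain := comm_log_bound A2 hA2sa (β' + T) (M + T) (by linarith) (by linarith) hspecA2 y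
  rw [hA2comm] at hmain
  -- bound for the G part
  have hTβ' : 0 ≤ T / β' := by positivity
  have hL0 : 0 ≤ Real.log (1 + T / β') := Real.log_nonneg (by linarith)
  have hGnorm : ‖cfc (fun t : ℝ => Real.log ((t + T) / t)) D'‖ ≤ Real.log (1 + T / β') := by
    apply norm_cfc_le hL0
    intro t ht
    obtain ⟨h1, h2⟩ := hspecD' ht
    have ht0 : 0 < t := lt_of_lt_of_le hβ'0 h1
    have he : (t + T) / t = 1 + T / t := by field_simp
    have hTt : 0 ≤ T / t := by positivity
    rw [Real.norm_eq_abs, he, abs_of_nonneg (Real.log_nonneg (by linarith))]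
    apply Real.log_le_log (by linarith)
    have : T / t ≤ T / β' := by gcongr
    linarith
  -- assemble
  rw [hgt_eq, hsplitlog, hcompA2]
  set X : H →L[ℂ] H := cfc Real.log A2 with hX_def
  set G : H →L[ℂ] H := cfc (fun t : ℝ => Real.log ((t + T) / t)) D' with hG_def
  have hsplit2 : (X - G) * y - y * (X - G) = (X * y - y * X) - (G * y - y * G) := by
    noncomm_ring
  rw [hsplit2]
  have hGcomm : ‖G * y - y * G‖ ≤ 2 * Real.log (1 + T / β') * ‖y‖ := by
    calc ‖G * y - y * G‖ ≤ ‖G * y‖ + ‖y * G‖ := norm_sub_le _ _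
      _ ≤ ‖G‖ * ‖y‖ + ‖y‖ * ‖G‖ := add_le_add (norm_mul_le _ _) (norm_mul_le _ _)
      _ ≤ Real.log (1 + T / β') * ‖y‖ + ‖y‖ * Real.log (1 + T / β') := by
          have := norm_nonneg y
          gcongr
      _ = 2 * Real.log (1 + T / β') * ‖y‖ := by ring
  have hXcomm : ‖X * y - y * X‖ ≤ (β' + T)⁻¹ * (‖D * y - y * D‖ + 2 * ‖y‖) :=
    hmain.trans (mul_le_mul_of_nonneg_left hcommD' (by positivity))
  have n1 := numeric1 β hβ
  have n2 := numeric2 β hβ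
  rw [← hT_def, ← hβ'_def] at n1 n2
  have e1 : (β' + T)⁻¹ * ‖D * y - y * D‖ ≤ 5 * (1/β) ^ ((1:ℝ)/3) * ‖D * y - y * D‖ :=
    mul_le_mul_of_nonneg_right n1 (norm_nonneg _)
  have e2 : (2 * Real.log (1 + T / β') + 2 * (β' + T)⁻¹) * ‖y‖
      ≤ (8 * (1/β) ^ ((1:ℝ)/3) + |Real.log β|) * ‖y‖ :=
    mul_le_mul_of_nonneg_right n2 (norm_nonneg _)
  calc ‖(X * y - y * X) - (G * y - y * G)‖
      ≤ ‖X * y - y * X‖ + ‖G * y - y * G‖ := norm_sub_le _ _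
    _ ≤ (β' + T)⁻¹ * (‖D * y - y * D‖ + 2 * ‖y‖) + 2 * Real.log (1 + T / β') * ‖y‖ := by
        linarith
    _ ≤ (8 * (1 / β) ^ ((1:ℝ)/3) + |Real.log β|) * ‖y‖
        + 5 * (1 / β) ^ ((1:ℝ)/3) * ‖D * y - y * D‖ := by
        nlinarith [e1, e2]
end

section
/- Let D be a bounded positive invertible operator on a complex Hilbert space H, let β > 0 be such that the spectrum of D is contained in [β, ∞), and let y be a bounded operator on H. Then ‖[log(D), y]‖ ≤ 13 · β^{−1/3} · ‖y‖^{2/3} · ‖[D, y]‖^{1/3}. -/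
set_option maxHeartbeats 2000000

open MeasureTheory intervalIntegral

lemma myLogSubLog {a b : ℝ} (hb : 0 < b) (h : b ≤ a) :
    Real.log a - Real.log b ≤ (a - b) / b := by
  have ha : 0 < a := lt_of_lt_of_le hb h
  rw [← Real.log_div ha.ne' hb.ne']
  have h1 := Real.log_le_sub_one_of_pos (x := a / b) (by positivity)
  have h2 : a / b - 1 = (a - b) / b := by field_simp
  linarith

lemma myAbsLogSubLog {a b : ℝ} (ha : 0 < a) (hb : 0 < b) :
    |Real.log a - Real.log b| ≤ |a - b| / min a b := by
  rcases le_total a b with h | h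
  · rw [min_eq_left h, abs_sub_comm a b, abs_of_nonneg (show (0:ℝ) ≤ b - a by linarith), abs_le]
    refine ⟨by linarith [myLogSubLog ha h], ?_⟩
    calc Real.log a - Real.log b ≤ 0 := by linarith [Real.log_le_log ha h]
      _ ≤ (b - a) / a := div_nonneg (by linarith) ha.le
  · rw [min_eq_right h, abs_of_nonneg (show (0:ℝ) ≤ a - b by linarith), abs_le]
    refine ⟨?_, myLogSubLog hb h⟩
    have h2 : 0 ≤ (a - b) / b := div_nonneg (by linarith) hb.le
    linarith [Real.log_le_log hb h]

/-- Step 2: optimization over T. -/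
lemma myCalculus {β u d L : ℝ} (hβ : 0 < β) (hu : 0 ≤ u) (hd : 0 ≤ d)
    (hy0 : u = 0 → d = 0)
    (key : ∀ T : ℝ, 0 ≤ T →
      L ≤ 2 * u * (Real.log (β + T) - Real.log β) + d / (β + T)) :
    L ≤ 13 * β ^ (-(1 : ℝ) / 3) * u ^ ((2 : ℝ) / 3) * d ^ ((1 : ℝ) / 3) := by
  by_cases hdu : d ≤ β * u
  · have h0 := key 0 le_rfl
    rw [add_zero, sub_self, mul_zero, zero_add] at h0
    refine h0.trans ?_
    have hd23 : d ^ ((2:ℝ)/3) ≤ (β * u) ^ ((2:ℝ)/3) :=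
      Real.rpow_le_rpow hd hdu (by norm_num)
    have hsplit : d / β = β⁻¹ * d ^ ((2:ℝ)/3) * d ^ ((1:ℝ)/3) := by
      rw [mul_assoc, ← Real.rpow_add_of_nonneg hd (by norm_num) (by norm_num)]
      norm_num
      ring
    rw [hsplit]
    have hBU : (β * u) ^ ((2:ℝ)/3) = β ^ ((2:ℝ)/3) * u ^ ((2:ℝ)/3) :=
      Real.mul_rpow hβ.le hu
    have hfac : β⁻¹ * β ^ ((2:ℝ)/3) = β ^ (-(1:ℝ)/3) := by
      rw [← Real.rpow_neg_one β, ← Real.rpow_add hβ]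
      norm_num
    have h1 : β⁻¹ * d ^ ((2:ℝ)/3) ≤ 13 * (β ^ (-(1:ℝ)/3) * u ^ ((2:ℝ)/3)) := by
      calc β⁻¹ * d ^ ((2:ℝ)/3) ≤ β⁻¹ * (β ^ ((2:ℝ)/3) * u ^ ((2:ℝ)/3)) := by
            rw [← hBU]; exact mul_le_mul_of_nonneg_left hd23 (by positivity)
        _ = β ^ (-(1:ℝ)/3) * u ^ ((2:ℝ)/3) := by rw [← mul_assoc, hfac]
        _ ≤ 13 * (β ^ (-(1:ℝ)/3) * u ^ ((2:ℝ)/3)) := by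
            nlinarith [mul_nonneg (Real.rpow_nonneg hβ.le (-(1:ℝ)/3)) (Real.rpow_nonneg hu ((2:ℝ)/3))]
    calc β⁻¹ * d ^ ((2:ℝ)/3) * d ^ ((1:ℝ)/3)
        ≤ 13 * (β ^ (-(1:ℝ)/3) * u ^ ((2:ℝ)/3)) * d ^ ((1:ℝ)/3) :=
          mul_le_mul_of_nonneg_right h1 (Real.rpow_nonneg hd _)
      _ = 13 * β ^ (-(1:ℝ)/3) * u ^ ((2:ℝ)/3) * d ^ ((1:ℝ)/3) := by ring
  · push_neg at hdu
    have hu0 : 0 < u := by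
      rcases eq_or_lt_of_le hu with h | h
      · exfalso; rw [hy0 h.symm] at hdu; rw [← h] at hdu; simp at hdu
      · exact h
    have hd0 : 0 < d := lt_of_le_of_lt (by positivity) hdu
    set s : ℝ := d / (β * u) with hs_def
    have hs1 : 1 < s := (one_lt_div (by positivity)).2 hdu
    have hs0 : 0 < s := by linarith
    have hT := key (β * (s - 1)) (by nlinarith)
    have hβs : β + β * (s - 1) = β * s := by ring
    rw [hβs] at hT
    have hlog : Real.log (β * s) - Real.log β = Real.log s := by
      rw [Real.log_mul hβ.ne' hs0.ne']; ring
    have hdval : d / (β * s) = u := by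
      rw [hs_def]; field_simp
    rw [hlog, hdval] at hT
    set w : ℝ := s ^ ((1:ℝ)/3) with hw_def
    have hw1 : 1 ≤ w := by
      rw [hw_def]
      calc (1:ℝ) = 1 ^ ((1:ℝ)/3) := (Real.one_rpow _).symm
        _ ≤ s ^ ((1:ℝ)/3) := Real.rpow_le_rpow zero_le_one hs1.le (by norm_num)
    have hw0 : 0 < w := by linarith
    have hlogw : Real.log s = 3 * Real.log w := by
      rw [hw_def, Real.log_rpow hs0]; ring
    have hwle : Real.log w ≤ w - 1 := Real.log_le_sub_one_of_pos hw0
    have hmain : 2 * u * Real.log s + u ≤ 13 * u * w := by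
      rw [hlogw]
      nlinarith [mul_le_mul_of_nonneg_left hwle hu0.le, mul_le_mul_of_nonneg_left hw1 hu0.le]
    refine hT.trans (hmain.trans (le_of_eq ?_))
    have hd_eq : d = β * u * s := by rw [hs_def]; field_simp
    have h1 : β ^ (-(1:ℝ)/3) * β ^ ((1:ℝ)/3) = 1 := by
      rw [← Real.rpow_add hβ]; norm_num
    have h2 : u ^ ((2:ℝ)/3) * u ^ ((1:ℝ)/3) = u := by
      rw [← Real.rpow_add hu0]; norm_num
    rw [hd_eq, Real.mul_rpow (by positivity) hs0.le, Real.mul_rpow hβ.le hu]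
    calc 13 * u * w = 13 * (β ^ (-(1:ℝ)/3) * β ^ ((1:ℝ)/3)) * (u ^ ((2:ℝ)/3) * u ^ ((1:ℝ)/3)) * w := by
          rw [h1, h2]; ring
      _ = 13 * β ^ (-(1:ℝ)/3) * u ^ ((2:ℝ)/3) * (β ^ ((1:ℝ)/3) * u ^ ((1:ℝ)/3) * s ^ ((1:ℝ)/3)) := by
          rw [hw_def]; ring

lemma myIntervalApply {Y : Type*} [TopologicalSpace Y] [CompactSpace Y]
    {f : ℝ → C(Y, ℝ)} {a b : ℝ} (hf : IntervalIntegrable f volume a b) (x : Y) :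
    (∫ t in a..b, f t) x = ∫ t in a..b, f t x := by
  rw [intervalIntegral_eq_integral_uIoc, intervalIntegral_eq_integral_uIoc]
  rw [ContinuousMap.smul_apply]
  rw [ContinuousMap.integral_apply hf.def']

lemma myKeyBound {H : Type*} [NormedAddCommGroup H] [InnerProductSpace ℂ H] [CompleteSpace H]
    [Nontrivial H]
    (D : H →L[ℂ] H) (hD : IsSelfAdjoint D)
    (β : ℝ) (hβ : 0 < β) (hspec : spectrum ℝ D ⊆ Set.Ici β)
    (y : H →L[ℂ] H) {T : ℝ} (hT : 0 ≤ T) :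
    ‖cfc Real.log D * y - y * cfc Real.log D‖ ≤
      2 * ‖y‖ * (Real.log (β + T) - Real.log β) + ‖D * y - y * D‖ / (β + T) := by
  refine le_of_forall_pos_le_add fun ε hε => ?_
  set u := ‖y‖ with hu_def
  set d := ‖D * y - y * D‖ with hd_def
  set M := ‖D‖ with hM_def
  set N : ℝ := max (max T 1) (2 * u * (M + 1) / ε) with hN_def
  have hN1 : (1:ℝ) ≤ N := le_trans (le_max_right T 1) (le_max_left _ _)
  have hNT : T ≤ N := le_trans (le_max_left T 1) (le_max_left _ _)
  have hN0 : (0:ℝ) < N := lt_of_lt_of_le one_pos hN1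
  -- the error term is at most ε
  have herr2 : 2 * u * ((M + 1) / N) ≤ ε := by
    have h1 : 2 * u * (M + 1) / ε ≤ N := le_max_right _ _
    have h2 : 2 * u * (M + 1) ≤ ε * N := by
      rw [div_le_iff₀ hε] at h1; linarith
    rw [mul_div_assoc'] at *
    rw [div_le_iff₀ hN0]
    linarith
  -- basic spectrum facts
  have hsx : ∀ x ∈ spectrum ℝ D, β ≤ x := fun x hx => hspec hx
  have hsxM : ∀ x ∈ spectrum ℝ D, |x| ≤ M := fun x hx => spectrum.norm_le_norm_of_mem hx
  -- the two functions
  set lf : ℝ → ℝ := fun x => Real.log (1 + N) - Real.log (x + N) + Real.log x with hlf_def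
  set hf : ℝ → ℝ := fun x => Real.log (x + N) - Real.log (1 + N) with hhf_def
  have hlogc : ∀ c : ℝ, 0 ≤ c → ContinuousOn (fun x : ℝ => Real.log (x + c)) (spectrum ℝ D) := by
    intro c hc x hx
    have hx0 : 0 < x := lt_of_lt_of_le hβ (hsx x hx)
    have hxc : x + c ≠ 0 := by positivity
    have hder : HasDerivAt (fun y : ℝ => Real.log (y + c)) ((x + c)⁻¹ * 1) x :=
      HasDerivAt.log ((hasDerivAt_id x).add_const c) hxc |>.congr_deriv (by simp)
    exact hder.continuousAt.continuousWithinAt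
  have hlogc0 : ContinuousOn Real.log (spectrum ℝ D) := by
    have := hlogc 0 le_rfl
    simpa using this
  have hlfc : ContinuousOn lf (spectrum ℝ D) :=
    (continuousOn_const.sub (hlogc N (by linarith))).add hlogc0
  have hhfc : ContinuousOn hf (spectrum ℝ D) :=
    (hlogc N (by linarith)).sub continuousOn_const
  -- splitting of cfc log
  have hsplit : cfc Real.log D = cfc lf D + cfc hf D := by
    rw [← cfc_add (a := D) lf hf hlfc hhfc]
    exact cfc_congr fun x _ => by simp [hlf_def, hhf_def]; ring
  have htri : ‖cfc Real.log D * y - y * cfc Real.log D‖ ≤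
      ‖cfc lf D * y - y * cfc lf D‖ + ‖cfc hf D * y - y * cfc hf D‖ := by
    rw [hsplit]
    calc ‖(cfc lf D + cfc hf D) * y - y * (cfc lf D + cfc hf D)‖
        = ‖(cfc lf D * y - y * cfc lf D) + (cfc hf D * y - y * cfc hf D)‖ := by
          congr 1; noncomm_ring
      _ ≤ _ := norm_add_le _ _
  -- bound on the h part
  have hherr : ‖cfc hf D‖ ≤ (M + 1) / N := by
    apply norm_cfc_le (by positivity)
    intro x hx
    have hxβ : β ≤ x := hsx x hx
    have hxM : |x| ≤ M := hsxM x hx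
    rw [Real.norm_eq_abs]
    refine (myAbsLogSubLog (by linarith) (by linarith)).trans ?_
    have hmin : N ≤ min (x + N) (1 + N) := le_min (by linarith) (by linarith)
    have habs : |x - 1| ≤ M + 1 := by
      have := abs_add_le x (-1)
      simp only [← sub_eq_add_neg, abs_neg, abs_one] at this
      linarith
    have hxn : x + N - (1 + N) = x - 1 := by ring
    rw [hxn]
    exact div_le_div₀ (by positivity) habs hN0 hmin
  have hhbound : ‖cfc hf D * y - y * cfc hf D‖ ≤ ε := by
    have h1 : ‖cfc hf D * y - y * cfc hf D‖ ≤ ‖cfc hf D‖ * u + u * ‖cfc hf D‖ := by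
      refine (norm_sub_le _ _).trans ?_
      exact add_le_add (norm_mul_le _ _) (norm_mul_le _ _)
    have h2 : ‖cfc hf D‖ * u ≤ ((M+1)/N) * u :=
      mul_le_mul_of_nonneg_right hherr (norm_nonneg _)
    have h3 : u * ‖cfc hf D‖ ≤ u * ((M+1)/N) :=
      mul_le_mul_of_nonneg_left hherr (norm_nonneg _)
    have := herr2
    nlinarith
  -- main part
  have hmainpart : ‖cfc lf D * y - y * cfc lf D‖ ≤
      2 * u * (Real.log (β + T) - Real.log β) + d / (β + T) := by
    have hGcont : Continuous fun p : ℝ × spectrum ℝ D =>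
        (max (1 + p.1) 1)⁻¹ - (max ((p.2 : ℝ) + p.1) β)⁻¹ := by
      apply Continuous.sub
      · exact Continuous.inv₀ ((continuous_const.add continuous_fst).max continuous_const)
          fun p => (lt_of_lt_of_le one_pos (le_max_right _ _)).ne'
      · exact Continuous.inv₀
          (((continuous_subtype_val.comp continuous_snd).add continuous_fst).max continuous_const)
          fun p => (lt_of_lt_of_le hβ (le_max_right _ _)).ne'
    set G : C(ℝ × spectrum ℝ D, ℝ) := ⟨_, hGcont⟩ with hG_def
    set g : ℝ → C(spectrum ℝ D, ℝ) := fun t => G.curry t with hg_def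
    have hgc : Continuous g := G.curry.continuous
    have hgint : ∀ a b : ℝ, IntervalIntegrable g volume a b := fun a b =>
      hgc.intervalIntegrable a b
    set φ : C(spectrum ℝ D, ℝ) →L[ℝ] (H →L[ℂ] H) := cfcL (R := ℝ) hD with hφ_def
    set F : ℝ → H →L[ℂ] H := fun t => φ (g t) with hF_def
    have hFc : Continuous F := φ.continuous.comp hgc
    have hFint : ∀ a b : ℝ, IntervalIntegrable F volume a b := fun a b =>
      hFc.intervalIntegrable a b
    have hrc : ∀ t : ℝ, Continuous fun x : ℝ => (max (x + t) β)⁻¹ := fun t =>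
      Continuous.inv₀ ((continuous_id.add continuous_const).max continuous_const)
        fun x => (lt_of_lt_of_le hβ (le_max_right _ _)).ne'
    set R : ℝ → H →L[ℂ] H := fun t => cfc (fun x : ℝ => (max (x + t) β)⁻¹) D with hR_def
    have hFcfc : ∀ t : ℝ, F t = cfc (fun x : ℝ => (max (1 + t) 1)⁻¹ - (max (x + t) β)⁻¹) D := by
      intro t
      have hcont : ContinuousOn (fun x : ℝ => (max (1 + t) 1)⁻¹ - (max (x + t) β)⁻¹)
          (spectrum ℝ D) := (continuous_const.sub (hrc t)).continuousOn
      rw [cfc_eq_cfcL hD hcont]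
      show φ (g t) = φ _
      congr 1
    have hRnorm : ∀ t : ℝ, 0 ≤ t → ‖R t‖ ≤ (β + t)⁻¹ := by
      intro t ht
      apply norm_cfc_le (by positivity)
      intro x hx
      have hxβ : β ≤ x := hsx x hx
      rw [Real.norm_eq_abs, max_eq_left (by linarith : β ≤ x + t),
        abs_of_pos (show (0:ℝ) < (x + t)⁻¹ by rw [inv_pos]; linarith)]
      exact inv_anti₀ (by linarith) (by linarith)
    have hcommF : ∀ t : ℝ, 0 ≤ t →
        F t * y - y * F t = R t * (D * y - y * D) * R t ∧
        F t * y - y * F t = y * R t - R t * y := by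
      intro t ht
      have hAc : ContinuousOn (fun x : ℝ => x + t) (spectrum ℝ D) :=
        (continuous_id.add continuous_const).continuousOn
      have hrcOn : ContinuousOn (fun x : ℝ => (max (x + t) β)⁻¹) (spectrum ℝ D) :=
        (hrc t).continuousOn
      have hidc : ContinuousOn (fun x : ℝ => x) (spectrum ℝ D) := continuousOn_id
      have hA : cfc (fun x : ℝ => x + t) D = D + algebraMap ℝ (H →L[ℂ] H) t := by
        rw [cfc_add_const t (fun x : ℝ => x) D hidc hD, cfc_id' ℝ D]
      have hxt0 : ∀ x ∈ spectrum ℝ D, x + t ≠ 0 := by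
        intro x hx
        have hxβ : β ≤ x := hsx x hx
        have : (0:ℝ) < x + t := by linarith
        exact this.ne'
      have hmax : ∀ x ∈ spectrum ℝ D, max (x + t) β = x + t := by
        intro x hx
        have hxβ : β ≤ x := hsx x hx
        exact max_eq_left (by linarith)
      have hRA : R t * (D + algebraMap ℝ (H →L[ℂ] H) t) = 1 := by
        rw [← hA, hR_def, ← cfc_mul _ _ D hrcOn hAc]
        have h1 : cfc (fun x : ℝ => (max (x + t) β)⁻¹ * (x + t)) D
            = cfc (fun _ : ℝ => (1:ℝ)) D :=
          cfc_congr fun x hx => by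
            rw [hmax x hx]; exact inv_mul_cancel₀ (hxt0 x hx)
        rw [h1, cfc_const_one ℝ D]
      have hAR : (D + algebraMap ℝ (H →L[ℂ] H) t) * R t = 1 := by
        rw [← hA, hR_def, ← cfc_mul _ _ D hAc hrcOn]
        have h1 : cfc (fun x : ℝ => (x + t) * (max (x + t) β)⁻¹) D
            = cfc (fun _ : ℝ => (1:ℝ)) D :=
          cfc_congr fun x hx => by
            rw [hmax x hx]; exact mul_inv_cancel₀ (hxt0 x hx)
        rw [h1, cfc_const_one ℝ D]
      set c : H →L[ℂ] H := algebraMap ℝ (H →L[ℂ] H) t with hc_def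
      have hyc : y * c - c * y = 0 := by
        rw [hc_def, Algebra.commutes t y]; exact sub_self _
      have hkey1 : R t * y - y * R t = R t * (y * D - D * y) * R t := by
        have h1 : R t * y = R t * y * ((D + c) * R t) := by rw [hAR, mul_one]
        have h2 : y * R t = (R t * (D + c)) * (y * R t) := by rw [hRA, one_mul]
        calc R t * y - y * R t
            = R t * y * ((D + c) * R t) - (R t * (D + c)) * (y * R t) := by
              rw [← h1, ← h2]
          _ = R t * ((y * D - D * y) + (y * c - c * y)) * R t := by noncomm_ring
          _ = R t * (y * D - D * y) * R t := by rw [hyc, add_zero]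
      have hFR : F t = algebraMap ℝ (H →L[ℂ] H) ((max (1 + t) 1)⁻¹) - R t := by
        rw [hFcfc t, hR_def, ← cfc_const ((max (1 + t) 1)⁻¹) D hD,
          ← cfc_sub (fun _ : ℝ => (max (1 + t) 1)⁻¹) (fun x : ℝ => (max (x + t) β)⁻¹) D
            continuousOn_const hrcOn]
      set c' : H →L[ℂ] H := algebraMap ℝ (H →L[ℂ] H) ((max (1 + t) 1)⁻¹) with hc'_def
      have hyc' : c' * y - y * c' = 0 := by
        rw [hc'_def, Algebra.commutes]; exact sub_self _
      have hFcomm : F t * y - y * F t = -(R t * y - y * R t) := by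
        rw [hFR]
        calc (c' - R t) * y - y * (c' - R t)
            = (c' * y - y * c') - (R t * y - y * R t) := by noncomm_ring
          _ = -(R t * y - y * R t) := by rw [hyc', zero_sub]
      constructor
      · rw [hFcomm, hkey1]; noncomm_ring
      · rw [hFcomm]; noncomm_ring
    have hb1 : ∀ t : ℝ, 0 ≤ t → ‖F t * y - y * F t‖ ≤ 2 * u * (β + t)⁻¹ := by
      intro t ht
      rw [(hcommF t ht).2]
      have hβt : (0:ℝ) < β + t := by linarith
      calc ‖y * R t - R t * y‖ ≤ ‖y * R t‖ + ‖R t * y‖ := norm_sub_le _ _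
        _ ≤ ‖y‖ * ‖R t‖ + ‖R t‖ * ‖y‖ := add_le_add (norm_mul_le _ _) (norm_mul_le _ _)
        _ ≤ 2 * u * (β + t)⁻¹ := by
            have h := hRnorm t ht
            have h2 : (0:ℝ) ≤ u := norm_nonneg y
            have h3 : ‖y‖ = u := rfl
            nlinarith [norm_nonneg (R t), inv_nonneg.mpr hβt.le]
    have hb2 : ∀ t : ℝ, 0 ≤ t →
        ‖F t * y - y * F t‖ ≤ d * ((β + t)⁻¹ * (β + t)⁻¹) := by
      intro t ht
      rw [(hcommF t ht).1]
      have hβt : (0:ℝ) < β + t := by linarith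
      have h := hRnorm t ht
      have hd0 : (0:ℝ) ≤ d := norm_nonneg _
      calc ‖R t * (D * y - y * D) * R t‖
          ≤ ‖R t * (D * y - y * D)‖ * ‖R t‖ := norm_mul_le _ _
        _ ≤ ‖R t‖ * ‖D * y - y * D‖ * ‖R t‖ :=
            mul_le_mul_of_nonneg_right (norm_mul_le _ _) (norm_nonneg _)
        _ ≤ d * ((β + t)⁻¹ * (β + t)⁻¹) := by
            have h4 : ‖D * y - y * D‖ = d := rfl
            have h5 : ‖R t‖ * ‖R t‖ ≤ (β + t)⁻¹ * (β + t)⁻¹ :=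
              mul_le_mul h h (norm_nonneg _) (inv_nonneg.mpr hβt.le)
            rw [h4]
            nlinarith [h5, norm_nonneg (R t), inv_nonneg.mpr hβt.le]
    have hrepr : cfc lf D = ∫ t in (0:ℝ)..N, F t := by
      have h1 : ∫ t in (0:ℝ)..N, F t = φ (∫ t in (0:ℝ)..N, g t) :=
        ContinuousLinearMap.intervalIntegral_comp_comm φ (hgint 0 N)
      rw [h1, cfc_eq_cfcL hD hlfc]
      congr 1
      ext x
      rw [myIntervalApply (hgint 0 N) x]
      have hx : β ≤ (x : ℝ) := hspec x.2
      have hEq : Set.EqOn (fun t => (g t) x) (fun t => (1 + t)⁻¹ - ((x : ℝ) + t)⁻¹)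
          (Set.uIcc 0 N) := by
        intro t ht
        rw [Set.uIcc_of_le (le_of_lt hN0)] at ht
        show (max (1 + t) 1)⁻¹ - (max ((x : ℝ) + t) β)⁻¹ = _
        rw [max_eq_left (by linarith [ht.1]), max_eq_left (by linarith [ht.1])]
      have hderiv : ∀ t ∈ Set.uIcc (0:ℝ) N,
          HasDerivAt (fun t => Real.log (1 + t) - Real.log ((x : ℝ) + t))
            ((1 + t)⁻¹ - ((x : ℝ) + t)⁻¹) t := by
        intro t ht
        rw [Set.uIcc_of_le (le_of_lt hN0)] at ht
        have h1 : (0:ℝ) < 1 + t := by linarith [ht.1]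
        have h2 : (0:ℝ) < (x : ℝ) + t := by linarith [ht.1]
        have d1 : HasDerivAt (fun s : ℝ => 1 + s) 1 t := (hasDerivAt_id t).const_add 1
        have d2 : HasDerivAt (fun s : ℝ => (x : ℝ) + s) 1 t := (hasDerivAt_id t).const_add _
        have := (d1.log h1.ne').sub (d2.log h2.ne')
        exact this.congr_deriv (by simp [one_div])
      have hci : IntervalIntegrable (fun t : ℝ => (1 + t)⁻¹ - ((x : ℝ) + t)⁻¹) volume 0 N := by
        apply ContinuousOn.intervalIntegrable
        rw [Set.uIcc_of_le (le_of_lt hN0)]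
        apply ContinuousOn.sub
        · exact ContinuousOn.inv₀ (continuous_const.add continuous_id).continuousOn
            fun t ht => by have := ht.1; exact (by linarith : (0:ℝ) < 1 + t).ne'
        · exact ContinuousOn.inv₀ (continuous_const.add continuous_id).continuousOn
            fun t ht => by have := ht.1; exact (by linarith : (0:ℝ) < (x : ℝ) + t).ne'
      show Set.restrict (spectrum ℝ D) lf x = _
      rw [intervalIntegral.integral_congr hEq,
        intervalIntegral.integral_eq_sub_of_hasDerivAt hderiv hci]
      simp only [Set.restrict_apply, hlf_def]
      rw [add_zero, Real.log_one]
      change Real.log (1 + N) - Real.log ((x:ℝ) + N) + Real.log x = _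
      ring
    set ψc : (H →L[ℂ] H) →L[ℝ] (H →L[ℂ] H) :=
      (ContinuousLinearMap.mul ℝ (H →L[ℂ] H)).flip y
        - ContinuousLinearMap.mul ℝ (H →L[ℂ] H) y with hψ_def
    have e2 : ∀ a b : ℝ, IntervalIntegrable (fun t => F t * y - y * F t) volume a b := by
      intro a b
      exact ((hFc.mul continuous_const).sub (continuous_const.mul hFc)).intervalIntegrable a b
    have hcommrep : cfc lf D * y - y * cfc lf D =
        (∫ t in (0:ℝ)..T, (F t * y - y * F t)) + ∫ t in T..N, (F t * y - y * F t) := by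
      have e1 : cfc lf D * y - y * cfc lf D = ψc (cfc lf D) := rfl
      rw [e1, hrepr, ← ContinuousLinearMap.intervalIntegral_comp_comm ψc (hFint 0 N)]
      exact (intervalIntegral.integral_add_adjacent_intervals (e2 0 T) (e2 T N)).symm
    have hI1 : ‖∫ t in (0:ℝ)..T, (F t * y - y * F t)‖ ≤
        2 * u * (Real.log (β + T) - Real.log β) := by
      have hbint : IntervalIntegrable (fun t : ℝ => 2 * u * (β + t)⁻¹) volume 0 T := by
        apply ContinuousOn.intervalIntegrable
        apply ContinuousOn.mul continuousOn_const
        apply ContinuousOn.inv₀ (continuous_const.add continuous_id).continuousOn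
        intro t ht
        rw [Set.uIcc_of_le hT] at ht
        have := ht.1
        exact (by linarith : (0:ℝ) < β + t).ne'
      have hae : ∀ᵐ t ∂volume.restrict (Set.uIoc (0:ℝ) T),
          ‖F t * y - y * F t‖ ≤ 2 * u * (β + t)⁻¹ := by
        filter_upwards [ae_restrict_mem measurableSet_uIoc] with t ht
        rw [Set.uIoc_of_le hT] at ht
        exact hb1 t ht.1.le
      refine (intervalIntegral.norm_integral_le_abs_of_norm_le hae hbint).trans ?_
      have hval : ∫ t in (0:ℝ)..T, 2 * u * (β + t)⁻¹
          = 2 * u * Real.log (β + T) - 2 * u * Real.log (β + 0) := by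
        apply intervalIntegral.integral_eq_sub_of_hasDerivAt _ hbint
        intro t ht
        rw [Set.uIcc_of_le hT] at ht
        have hβt : (0:ℝ) < β + t := by linarith [ht.1]
        have dd : HasDerivAt (fun s : ℝ => β + s) 1 t := (hasDerivAt_id t).const_add β
        have := (dd.log hβt.ne').const_mul (2 * u)
        simpa [one_div] using this
      rw [hval, add_zero]
      have hu0 : (0:ℝ) ≤ u := norm_nonneg y
      have hlm : Real.log β ≤ Real.log (β + T) := Real.log_le_log hβ (by linarith)
      rw [abs_of_nonneg (by nlinarith)]
      linarith
    have hI2 : ‖∫ t in T..N, (F t * y - y * F t)‖ ≤ d / (β + T) := by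
      have hd0 : (0:ℝ) ≤ d := norm_nonneg _
      have hbint : IntervalIntegrable (fun t : ℝ => d * ((β + t)⁻¹ * (β + t)⁻¹)) volume T N := by
        apply ContinuousOn.intervalIntegrable
        apply ContinuousOn.mul continuousOn_const
        apply ContinuousOn.mul <;>
        · apply ContinuousOn.inv₀ (continuous_const.add continuous_id).continuousOn
          intro t ht
          rw [Set.uIcc_of_le hNT] at ht
          have := ht.1
          exact (by linarith : (0:ℝ) < β + t).ne'
      have hae : ∀ᵐ t ∂volume.restrict (Set.uIoc T N),
          ‖F t * y - y * F t‖ ≤ d * ((β + t)⁻¹ * (β + t)⁻¹) := by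
        filter_upwards [ae_restrict_mem measurableSet_uIoc] with t ht
        rw [Set.uIoc_of_le hNT] at ht
        exact hb2 t (le_trans hT ht.1.le)
      refine (intervalIntegral.norm_integral_le_abs_of_norm_le hae hbint).trans ?_
      have hval : ∫ t in T..N, d * ((β + t)⁻¹ * (β + t)⁻¹)
          = -(d * (β + N)⁻¹) - -(d * (β + T)⁻¹) := by
        apply intervalIntegral.integral_eq_sub_of_hasDerivAt
          (f := fun s => -(d * (β + s)⁻¹)) _ hbint
        intro t ht
        rw [Set.uIcc_of_le hNT] at ht
        have hβt : (0:ℝ) < β + t := by linarith [ht.1]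
        have dd : HasDerivAt (fun s : ℝ => β + s) 1 t := (hasDerivAt_id t).const_add β
        have hinv := ((dd.inv hβt.ne').const_mul d).neg
        have heq : d * ((β + t)⁻¹ * (β + t)⁻¹) = -(d * (-1 / (β + t) ^ 2)) := by
          rw [← mul_inv, ← sq, neg_div, one_div, mul_neg, neg_neg]
        rw [heq]
        exact hinv
      rw [hval]
      have hTN : (β + N)⁻¹ ≤ (β + T)⁻¹ := by
        apply inv_anti₀ (by linarith) (by linarith)
      rw [abs_of_nonneg (by nlinarith)]
      have : d / (β + T) = d * (β + T)⁻¹ := div_eq_mul_inv _ _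
      nlinarith [inv_nonneg.mpr (show (0:ℝ) ≤ β + N by linarith)]
    calc ‖cfc lf D * y - y * cfc lf D‖
        ≤ ‖∫ t in (0:ℝ)..T, (F t * y - y * F t)‖
          + ‖∫ t in T..N, (F t * y - y * F t)‖ := by
          rw [hcommrep]; exact norm_add_le _ _
      _ ≤ 2 * u * (Real.log (β + T) - Real.log β) + d / (β + T) := add_le_add hI1 hI2
  calc ‖cfc Real.log D * y - y * cfc Real.log D‖
      ≤ ‖cfc lf D * y - y * cfc lf D‖ + ‖cfc hf D * y - y * cfc hf D‖ := htri
    _ ≤ (2 * u * (Real.log (β + T) - Real.log β) + d / (β + T)) + ε :=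
        add_le_add hmainpart hhbound

/-- The Corollary of Section 6 of the paper (for a bounded positive invertible `D`
with spectrum contained in `[β, ∞)`, `β > 0`):
`‖log(D), y]‖ ≤ 13 β^{−1/3} ‖y‖^{2/3} ‖[D,y]‖^{1/3}`. -/
theorem commutator_estimate_log_optimized
    {H : Type*} [NormedAddCommGroup H] [InnerProductSpace ℂ H] [CompleteSpace H]
    (D : H →L[ℂ] H) (hD : IsSelfAdjoint D)
    (β : ℝ) (hβ : 0 < β) (hspec : spectrum ℝ D ⊆ Set.Ici β)
    (y : H →L[ℂ] H) :
    ‖cfc Real.log D * y - y * cfc Real.log D‖ ≤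
      13 * β ^ (-(1 : ℝ) / 3) * ‖y‖ ^ ((2 : ℝ) / 3) * ‖D * y - y * D‖ ^ ((1 : ℝ) / 3) := by
  have hRHS : 0 ≤ 13 * β ^ (-(1 : ℝ) / 3) * ‖y‖ ^ ((2 : ℝ) / 3)
      * ‖D * y - y * D‖ ^ ((1 : ℝ) / 3) :=
    mul_nonneg (mul_nonneg (mul_nonneg (by norm_num) (Real.rpow_nonneg hβ.le _))
      (Real.rpow_nonneg (norm_nonneg _) _)) (Real.rpow_nonneg (norm_nonneg _) _)
  rcases subsingleton_or_nontrivial H with hH | hH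
  · have h0 : cfc Real.log D * y - y * cfc Real.log D = 0 := Subsingleton.elim _ _
    rw [h0, norm_zero]
    exact hRHS
  · refine myCalculus hβ (norm_nonneg _) (norm_nonneg _) ?_ ?_
    · intro hy
      rw [norm_eq_zero] at hy
      rw [hy]
      simp
    · intro T hT
      exact myKeyBound D hD β hβ hspec y hT
end
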